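/- arXiv:2301.01450 — 11 statements merged into one kernel-verified Lean document; each statement's English description precedes it below -/
import Mathlib

section
/- Let k be an algebraically closed field of characteristic 2, V a k-vector space of dimension 2m (m ≥ 2), and q : V → k a quadratic form with polar form A(x,y) = q(x+y) + q(x) + q(y). Let N = {x ∈ V : A(x,y) = 0 for all y ∈ V} be the null space of A. Assume dim N = 2 and that the set of singular vectors of N, namely N_0 = {x ∈ N : q(x) = 0}, is a 1-dimensional subspace. Let W ⊆ V be a totally singular subspace of dimension m containing N_0. Then there exists a basis e_1,…,e_m,f_1,…,f_m of V such that e_1,…,e_m is a basis of W, the span of f_2,…,f_m is totally singular for q, A(e_i,f_j) = δ_{ij} for all i,j = 2,…,m, e_1 spans N_0, and {e_1,f_1} is a basis of N. -/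
/-!
The radical `N` of the polar form is spanned by a singular vector `v` and a vector `w` with
`q w ≠ 0`. Extend `v` to a basis `v, e₂, …, eₘ` of `W`. Since `W ∩ N = span {v}`, the
functionals `polar q eᵢ` are independent, so there are `gⱼ` with `polar q eᵢ gⱼ = δᵢⱼ`. In
characteristic 2 the polar form is alternating, and a triangular correction by the `eᵢ` makes
the `gⱼ` pairwise orthogonal. Finally, as `w` lies in the radical, `gⱼ + s w` has the same
pairings for every scalar `s`, and `q (gⱼ + s w) = q gⱼ + s² q w` vanishes for a square root
`s` of `q gⱼ / q w`. Pairing a linear relation among `v, eᵢ, w, fⱼ` with the `eᵢ` and `fⱼ`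
shows that these `2m` vectors are independent.
-/

open Module Submodule QuadraticMap
open LinearMap (BilinForm)

section LinearAlgebra

variable {K V : Type*} [Field K] [AddCommGroup V] [Module K V]

theorem exists_span_singleton_eq_and_span_pair_eq {P Q : Submodule K V} (hPQ : P ≤ Q)
    (hP : finrank K P = 1) (hQ : finrank K Q = 2) :
    ∃ v w : V, span K {v} = P ∧ span K {v, w} = Q ∧ LinearIndependent K ![v, w] ∧ w ∉ P := by
  have := Module.finite_of_finrank_pos (hP ▸ Nat.one_pos)
  have := Module.finite_of_finrank_pos (hQ ▸ Nat.two_pos)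
  obtain ⟨v, hvP, hv⟩ := P.exists_mem_ne_zero_of_ne_bot (by rintro rfl; simp at hP)
  have hvP' : span K {v} = P :=
    eq_of_le_of_finrank_eq ((span_singleton_le_iff_mem _ _).2 hvP)
      (by rw [finrank_span_singleton hv, hP])
  obtain ⟨w, hwQ, hwP⟩ := SetLike.exists_of_lt (hPQ.lt_of_ne (by rintro rfl; omega))
  have hind : LinearIndependent K ![v, w] :=
    (LinearIndependent.pair_iff' hv).2 fun a h =>
      hwP (h ▸ hvP' ▸ smul_mem _ a (mem_span_singleton_self v))
  refine ⟨v, w, hvP', eq_of_le_of_finrank_eq ?_ ?_, hind, hwP⟩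
  · rw [span_le]
    rintro x (rfl | rfl)
    exacts [hPQ hvP, hwQ]
  · rw [hQ, ← Matrix.range_cons_cons_empty v w ![], finrank_span_eq_card hind]
    simp

theorem LinearIndependent.eq_zero_of_sum_mem_span_head {n : ℕ} {v : V} {e : Fin n → V}
    (h : LinearIndependent K (Fin.cons v e : Fin (n + 1) → V)) {a : Fin n → K}
    (ha : ∑ i, a i • e i ∈ span K {v}) : a = 0 := by
  obtain ⟨c, hc⟩ := mem_span_singleton.1 ha
  have := Fintype.linearIndependent_iff.1 h (Fin.cons (-c) a)
    (by simp [Fin.sum_univ_succ, hc])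
  funext i
  simpa using this i.succ

theorem exists_linearIndependent_fin_cons {W : Submodule K V} {v : V} (hvW : v ∈ W) (hv : v ≠ 0)
    {n : ℕ} (hW : finrank K W = n + 1) :
    ∃ e : Fin n → V, LinearIndependent K (Fin.cons v e : Fin (n + 1) → V) ∧
      span K (Set.range (Fin.cons v e : Fin (n + 1) → V)) = W := by
  have extend : ∀ j ≤ n, ∃ e : Fin j → W,
      LinearIndependent K (Fin.cons ⟨v, hvW⟩ e : Fin (j + 1) → W) := by
    intro j hj
    induction j with
    | zero =>
      exact ⟨Fin.elim0, linearIndependent_finCons.2 ⟨linearIndependent_empty_type, by simpa⟩⟩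
    | succ j ih =>
      obtain ⟨e, he⟩ := ih (by omega)
      obtain ⟨x, hx⟩ := exists_linearIndependent_snoc_of_lt_finrank he (by omega)
      exact ⟨Fin.snoc e x, by rwa [Fin.cons_snoc_eq_snoc_cons]⟩
  obtain ⟨e, he⟩ := extend n le_rfl
  have hspan := he.span_eq_top_of_card_eq_finrank (by simp [hW])
  have hcomp : (Fin.cons v (W.subtype ∘ e) : Fin (n + 1) → V) = W.subtype ∘ Fin.cons ⟨v, hvW⟩ e :=
    (Fin.comp_cons W.subtype ⟨v, hvW⟩ e).symm
  refine ⟨W.subtype ∘ e, hcomp ▸ he.map' W.subtype W.ker_subtype, ?_⟩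
  rw [hcomp, Set.range_comp, ← map_span, hspan, map_subtype_top]

theorem LinearMap.BilinForm.exists_apply_eq_ite {ι : Type*} [Fintype ι] [DecidableEq ι]
    (B : BilinForm K V) (e : ι → V) (he : ∀ a : ι → K, B (∑ i, a i • e i) = 0 → a = 0) :
    ∃ g : ι → V, ∀ i j, B (e i) (g j) = if i = j then 1 else 0 := by
  let Φ : V →ₗ[K] ι → K := LinearMap.pi fun i => B (e i)
  have hΦ : Function.Surjective Φ := by
    rw [← LinearMap.dualMap_injective_iff, injective_iff_map_eq_zero]
    intro φ hφ
    have ha := he (fun i => φ fun j => if i = j then 1 else 0) <| by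
      ext y
      calc B (∑ i, _ • e i) y = φ (Φ y) := by
            simp [Φ, φ.pi_apply_eq_sum_univ (Φ y), mul_comm]
        _ = 0 := LinearMap.congr_fun hφ y
    refine LinearMap.ext fun x => ?_
    simp [φ.pi_apply_eq_sum_univ x, funext_iff.1 ha]
  choose g hg using fun j => hΦ (Pi.single j 1)
  exact ⟨g, fun i j => by simpa [Φ, Pi.single_apply] using congrFun (hg j) i⟩

end LinearAlgebra

namespace LinearMap.BilinForm.IsAlt

variable {R K V ι : Type*} [AddCommGroup V] [Fintype ι]

theorem exists_isotropic_apply_eq_ite [CommRing R] [Module R V] [LinearOrder ι]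
    {B : BilinForm R V} (hB : B.IsAlt) {e g : ι → V} (hee : ∀ i j, B (e i) (e j) = 0)
    (heg : ∀ i j, B (e i) (g j) = if i = j then 1 else 0) :
    ∃ h : ι → V, (∀ i j, B (e i) (h j) = if i = j then 1 else 0) ∧ ∀ i j, B (h i) (h j) = 0 := by
  set c : ι → ι → R := fun j i => if i < j then B (g i) (g j) else 0 with hc
  have hge : ∀ j i, B (g j) (e i) = -if i = j then 1 else 0 := fun j i => by
    rw [← heg, hB.neg_eq]
  refine ⟨fun j => g j + ∑ i, c j i • e i, fun i j => by simp [heg, hee], fun j l => ?_⟩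
  have hpair : B (g j + ∑ i, c j i • e i) (g l + ∑ i, c l i • e i)
      = B (g j) (g l) + c j l - c l j := by
    simp [hge, heg, hee]
    ring
  rw [hpair]
  rcases lt_trichotomy j l with hjl | rfl | hjl
  · simp [hc, hjl, hjl.not_gt]
  · simp [hc, hB.self_eq_zero]
  · simp [hc, hjl, hjl.not_gt, ← hB.neg_eq (g l) (g j)]

theorem eq_zero_of_apply_sum_add_sum_eq_zero [CommRing R] [Module R V] [DecidableEq ι]
    {B : BilinForm R V} (hB : B.IsAlt) {x y : ι → V}
    (hxx : ∀ i j, B (x i) (x j) = 0) (hyy : ∀ i j, B (y i) (y j) = 0)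
    (hxy : ∀ i j, B (x i) (y j) = if i = j then 1 else 0) {a b : ι → R}
    (h : B (∑ i, a i • x i + ∑ i, b i • y i) = 0) : a = 0 ∧ b = 0 := by
  have hyx : ∀ i j, B (y i) (x j) = -if j = i then 1 else 0 := fun i j => by
    rw [← hxy, hB.neg_eq]
  constructor <;> funext l
  · simpa [hxy, hyy] using LinearMap.congr_fun h (y l)
  · simpa [hxx, hyx] using LinearMap.congr_fun h (x l)

theorem linearIndependent_sumElim_cons [Field K] [Module K V] {B : BilinForm K V}
    (hB : B.IsAlt) {n : ℕ} {x y : Fin n → V} {x₀ y₀ : V} (h₀ : LinearIndependent K ![x₀, y₀])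
    (hx₀ : B x₀ = 0) (hy₀ : B y₀ = 0) (hxx : ∀ i j, B (x i) (x j) = 0)
    (hyy : ∀ i j, B (y i) (y j) = 0) (hxy : ∀ i j, B (x i) (y j) = if i = j then 1 else 0) :
    LinearIndependent K
      (Sum.elim (Fin.cons x₀ x : Fin (n + 1) → V) (Fin.cons y₀ y : Fin (n + 1) → V)) := by
  rw [Fintype.linearIndependent_iff]
  intro c hc
  simp only [Fintype.sum_sum_type, Fin.sum_univ_succ, Sum.elim_inl, Sum.elim_inr, Fin.cons_zero,
    Fin.cons_succ] at hc
  have hab := hB.eq_zero_of_apply_sum_add_sum_eq_zero hxx hyy hxy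
    (a := fun i => c (.inl i.succ)) (b := fun i => c (.inr i.succ)) <| by
    rw [show ∑ i, c (.inl i.succ) • x i + ∑ i, c (.inr i.succ) • y i
      = -(c (.inl 0) • x₀ + c (.inr 0) • y₀) by linear_combination (norm := module) hc]
    simp [hx₀, hy₀]
  simp only [funext_iff, Pi.zero_apply] at hab
  obtain ⟨h0x, h0y⟩ := LinearIndependent.pair_iff.1 h₀ (c (.inl 0)) (c (.inr 0)) <| by
    simpa [hab.1, hab.2] using hc
  rintro (i | i) <;> cases i using Fin.cases
  exacts [h0x, hab.1 _, h0y, hab.2 _]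

end LinearMap.BilinForm.IsAlt

theorem QuadraticMap.polar_eq_zero_of_forall_mem_eq_zero {R M N : Type*} [CommRing R]
    [AddCommGroup M] [Module R M] [AddCommGroup N] [Module R N] {Q : QuadraticMap R M N}
    {W : Submodule R M} (hW : ∀ x ∈ W, Q x = 0) {x y : M} (hx : x ∈ W) (hy : y ∈ W) :
    polar Q x y = 0 := by
  rw [polar, hW _ hx, hW _ hy, hW _ (W.add_mem hx hy), sub_zero, sub_zero]

theorem QuadraticMap.eq_zero_of_mem_span_range {R M N ι : Type*} [CommRing R] [AddCommGroup M]
    [Module R M] [AddCommGroup N] [Module R N] (Q : QuadraticMap R M N) {f : ι → M}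
    (hq : ∀ i, Q (f i) = 0) (hpolar : ∀ i j, polar Q (f i) (f j) = 0) {x : M}
    (hx : x ∈ span R (Set.range f)) : Q x = 0 := by
  set S := span R (Set.range f)
  have hS : S ≤ LinearMap.ker ((polarBilin Q).compl₂ S.subtype) := by
    refine span_le.2 (Set.range_subset_iff.2 fun i => ?_)
    suffices S ≤ LinearMap.ker (polarBilin Q (f i)) from
      LinearMap.ext fun z => this z.2
    exact span_le.2 (Set.range_subset_iff.2 (hpolar i))
  induction hx using span_induction with
  | mem y hy => obtain ⟨i, rfl⟩ := hy; exact hq i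
  | zero => exact map_zero Q
  | add y z hy hz ihy ihz =>
    rw [QuadraticMap.map_add (⇑Q), ihy, ihz, ← polarBilin_apply_apply]
    simpa using LinearMap.congr_fun (hS hy) ⟨z, hz⟩
  | smul a y _ ih => rw [QuadraticMap.map_smul, ih, smul_zero]

section CharTwo

variable {K V : Type*} [Field K] [CharP K 2] [AddCommGroup V] [Module K V]

theorem QuadraticMap.polarBilin_isAlt_of_charP_two (q : QuadraticForm K V) :
    BilinForm.IsAlt (polarBilin q) := fun x => by
  rw [polarBilin_apply_apply, polar_self, two_smul, CharTwo.add_self_eq_zero]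

theorem QuadraticMap.exists_map_add_smul_eq_zero [PerfectRing K 2] (q : QuadraticForm K V)
    {v : V} (hv : polarBilin q v = 0) (hqv : q v ≠ 0) (x : V) : ∃ s : K, q (x + s • v) = 0 := by
  obtain ⟨s, hs : s ^ 2 = q x / q v⟩ := (PerfectRing.bijective_frobenius (R := K) (p := 2)).2 _
  have hxv : polar q x (s • v) = 0 := by
    rw [polar_comm, polar_smul_left, ← polarBilin_apply_apply, hv, LinearMap.zero_apply, smul_zero]
  refine ⟨s, ?_⟩
  rw [QuadraticMap.map_add (⇑q), hxv, QuadraticMap.map_smul, ← pow_two, hs, smul_eq_mul,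
    div_mul_cancel₀ _ hqv, add_zero, CharTwo.add_self_eq_zero]

theorem QuadraticMap.exists_isotropic_hyperbolic_partners [PerfectRing K 2] {ι : Type*}
    [Fintype ι] [LinearOrder ι] (q : QuadraticForm K V) {e : ι → V}
    (hee : ∀ i j, polar q (e i) (e j) = 0)
    (he : ∀ a : ι → K, polarBilin q (∑ i, a i • e i) = 0 → a = 0) {v : V}
    (hv : polarBilin q v = 0) (hqv : q v ≠ 0) :
    ∃ f : ι → V, (∀ i j, polar q (e i) (f j) = if i = j then 1 else 0) ∧
      (∀ i j, polar q (f i) (f j) = 0) ∧ ∀ j, q (f j) = 0 := by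
  obtain ⟨g, hg⟩ := BilinForm.exists_apply_eq_ite (polarBilin q) e he
  obtain ⟨h, heh, hhh⟩ := (polarBilin_isAlt_of_charP_two q).exists_isotropic_apply_eq_ite hee hg
  choose s hs using fun j => exists_map_add_smul_eq_zero q hv hqv (h j)
  have hvx : ∀ x, polar q v x = 0 := fun x => by
    rw [← polarBilin_apply_apply, hv, LinearMap.zero_apply]
  have hpolar : ∀ x y : V, ∀ a : K, polar q x (y + a • v) = polar q x y := fun x y a => by
    rw [polar_add_right, polar_smul_right, polar_comm _ x v, hvx, smul_zero, add_zero]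
  refine ⟨fun j => h j + s j • v, fun i j => ?_, fun i j => ?_, hs⟩
  · rw [hpolar]
    exact heh i j
  · rw [hpolar, polar_comm, hpolar, polar_comm]
    exact hhh i j

end CharTwo
theorem stmt_1_general (k : Type*) [Field k] [IsAlgClosed k] [CharP k 2]
    (V : Type*) [AddCommGroup V] [Module k V]
    (m : ℕ) [NeZero m] (hdim : Module.finrank k V = 2 * m)
    (q : QuadraticForm k V)
    (N : Submodule k V)
    (hN : ∀ x : V, x ∈ N ↔ ∀ y : V, QuadraticMap.polar (⇑q) x y = 0)
    (hNdim : Module.finrank k N = 2)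
    (N0 : Submodule k V)
    (hN0 : (N0 : Set V) = {x : V | x ∈ N ∧ q x = 0})
    (hN0dim : Module.finrank k N0 = 1)
    (W : Submodule k V) (hW : ∀ x ∈ W, q x = 0)
    (hWdim : Module.finrank k W = m)
    (hN0W : N0 ≤ W) :
    ∃ e f : Fin m → V,
      LinearIndependent k (Sum.elim e f) ∧
      Submodule.span k (Set.range (Sum.elim e f)) = ⊤ ∧
      Submodule.span k (Set.range e) = W ∧
      (∀ x ∈ Submodule.span k (f '' {j : Fin m | j ≠ 0}), q x = 0) ∧
      (∀ i j : Fin m, i ≠ 0 → j ≠ 0 →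
        QuadraticMap.polar (⇑q) (e i) (f j) = if i = j then 1 else 0) ∧
      Submodule.span k ({e 0} : Set V) = N0 ∧
      Submodule.span k ({e 0, f 0} : Set V) = N := by
  obtain ⟨n, rfl⟩ := Nat.exists_eq_add_one_of_ne_zero (NeZero.ne m)
  obtain rfl : N = LinearMap.ker (polarBilin q) := by
    ext x
    simp [hN, LinearMap.ext_iff, polarBilin_apply_apply]
  have hmemN0 (x : V) : x ∈ N0 ↔ polarBilin q x = 0 ∧ q x = 0 := Set.ext_iff.1 hN0 x
  obtain ⟨v, w, hv, hvw, hind, hwN0⟩ :=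
    exists_span_singleton_eq_and_span_pair_eq (fun x hx => ((hmemN0 x).1 hx).1) hN0dim hNdim
  have hvN : v ∈ LinearMap.ker (polarBilin q) := hvw ▸ subset_span (by simp)
  have hwN : w ∈ LinearMap.ker (polarBilin q) := hvw ▸ subset_span (by simp)
  obtain ⟨e, he, heW⟩ := exists_linearIndependent_fin_cons (hN0W (hv ▸ mem_span_singleton_self v))
    (by simpa using hind.ne_zero 0) hWdim
  have heW' (i : Fin n) : e i ∈ W := heW ▸ subset_span ⟨i.succ, rfl⟩
  have hee (i j : Fin n) : polar q (e i) (e j) = 0 :=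
    polar_eq_zero_of_forall_mem_eq_zero hW (heW' i) (heW' j)
  obtain ⟨f, hef, hff, hqf⟩ := exists_isotropic_hyperbolic_partners q hee
    (fun a ha => he.eq_zero_of_sum_mem_span_head <| hv ▸ (hmemN0 _).2
      ⟨ha, hW _ (sum_mem fun i _ => W.smul_mem _ (heW' i))⟩)
    hwN fun h => hwN0 ((hmemN0 w).2 ⟨hwN, h⟩)
  have hli := (polarBilin_isAlt_of_charP_two q).linearIndependent_sumElim_cons hind hvN hwN hee
    hff hef
  refine ⟨Fin.cons v e, Fin.cons w f, hli, hli.span_eq_top_of_card_eq_finrank ?_, heW, ?_, ?_,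
    hv, hvw⟩
  · simp only [Fintype.card_sum, Fintype.card_fin, hdim]
    ring
  · rw [← Set.compl_singleton_eq, ← Fin.range_succ, ← Set.range_comp, Fin.cons_comp_succ]
    exact fun x => eq_zero_of_mem_span_range q hqf hff
  · intro i j hi hj
    obtain ⟨i, rfl⟩ := Fin.exists_succ_eq_of_ne_zero hi
    obtain ⟨j, rfl⟩ := Fin.exists_succ_eq_of_ne_zero hj
    simpa using hef i j

/-- Bhosle, Lemma 2.5 (2): normal form of a quadratic form of defect two
in characteristic 2 whose null space contains a unique one-dimensional singular subspace. -/
theorem stmt_1 (k : Type*) [Field k] [IsAlgClosed k] [CharP k 2]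
    (V : Type*) [AddCommGroup V] [Module k V] [FiniteDimensional k V]
    (m : ℕ) [NeZero m] (hm : 2 ≤ m) (hdim : Module.finrank k V = 2 * m)
    (q : QuadraticForm k V)
    (N : Submodule k V)
    (hN : ∀ x : V, x ∈ N ↔ ∀ y : V, QuadraticMap.polar (⇑q) x y = 0)
    (hNdim : Module.finrank k N = 2)
    (N0 : Submodule k V)
    (hN0 : (N0 : Set V) = {x : V | x ∈ N ∧ q x = 0})
    (hN0dim : Module.finrank k N0 = 1)
    (W : Submodule k V) (hW : ∀ x ∈ W, q x = 0)
    (hWdim : Module.finrank k W = m)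
    (hN0W : N0 ≤ W) :
    ∃ e f : Fin m → V,
      LinearIndependent k (Sum.elim e f) ∧
      Submodule.span k (Set.range (Sum.elim e f)) = ⊤ ∧
      Submodule.span k (Set.range e) = W ∧
      (∀ x ∈ Submodule.span k (f '' {j : Fin m | j ≠ 0}), q x = 0) ∧
      (∀ i j : Fin m, i ≠ 0 → j ≠ 0 →
        QuadraticMap.polar (⇑q) (e i) (f j) = if i = j then 1 else 0) ∧
      Submodule.span k ({e 0} : Set V) = N0 ∧
      Submodule.span k ({e 0, f 0} : Set V) = N :=
  stmt_1_general k V m hdim q N hN hNdim N0 hN0 hN0dim W hW hWdim hN0W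
end

section
/- Let k be an algebraically closed field of characteristic 2 and let q_1, q_2 ∈ k[X_0,…,X_5] be homogeneous polynomials of degree 2. Call a nonzero vector v ∈ k^6 a singular point of the intersection Q_1 ∩ Q_2 if q_1(v) = q_2(v) = 0 and the 2×6 Jacobian matrix ((∂q_i/∂X_j)(v)) has rank at most 1. If Q_1 ∩ Q_2 has no singular point, then there is no 3-dimensional linear subspace W ⊆ k^6 on which both q_1 and q_2 vanish identically (i.e., the nonsingular intersection of two quadrics in P^5 contains no plane). -/
/-!
For a quadratic form `q` the gradient `∇q` is linear, and the polarization identity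
`q(x + w) = q(x) + q(w) + ⟨w, ∇q(x)⟩` shows that if `q` vanishes on a subspace `W` then `∇q`
maps `W` into its orthogonal `W⊥`. When `2 dim W ≥ n`, `dim W⊥ ≤ dim W`, so over an
algebraically closed field some nontrivial member `s ∇q₁ + t ∇q₂` of the pencil of maps
`W → W⊥` kills a vector `x ≠ 0`. Such an `x` lies on `Q₁ ∩ Q₂` and the rows of the Jacobian
at `x` are linearly dependent.
-/
open MvPolynomial Module Matrix

section

variable {k : Type*} [Field k]

theorem Finsupp.exists_eq_single_add_single_of_weight_one_eq_two {σ : Type*} {d : σ →₀ ℕ}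
    (hd : Finsupp.weight 1 d = 2) : ∃ a b : σ, d = single a 1 + single b 1 := by
  classical
  obtain ⟨a, b, hab⟩ := Multiset.card_eq_two.mp
    (show Multiset.card (toMultiset d) = 2 by
      simpa [card_toMultiset, weight_apply, Finsupp.sum] using hd)
  refine ⟨a, b, ?_⟩
  rw [← toMultiset_toFinsupp d, hab, Multiset.insert_eq_cons, ← Multiset.singleton_add,
    map_add, Multiset.toFinsupp_singleton, Multiset.toFinsupp_singleton]

theorem Matrix.rank_le_one_of_smul_add_smul_eq_zero {n : Type*} [Fintype n]
    (M : Matrix (Fin 2) n k) {s t : k} (hst : s ≠ 0 ∨ t ≠ 0) (h : s • M 0 + t • M 1 = 0) :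
    M.rank ≤ 1 := by
  have hdep : ¬ LinearIndependent k M.row := by
    rw [show M.row = ![M 0, M 1] from funext fun i => by fin_cases i <;> rfl,
      LinearIndependent.pair_iff]
    intro hli
    exact hst.elim (· (hli s t h).1) (· (hli s t h).2)
  have hle : M.rank ≤ 2 := by simpa using M.rank_le_card_height
  have hne : M.rank ≠ 2 := by
    rw [linearIndependent_iff_card_eq_finrank_span, Fintype.card_fin] at hdep
    rw [M.rank_eq_finrank_span_row]
    exact Ne.symm hdep
  omega

theorem Matrix.dotProductBilin_nondegenerate (σ : Type*) [Fintype σ] :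
    LinearMap.BilinForm.Nondegenerate (dotProductBilin k k : LinearMap.BilinForm k (σ → k)) := by
  classical
  refine ⟨fun x hx => funext fun j => ?_, fun y hy => funext fun j => ?_⟩
  · simpa using hx (Pi.single j 1)
  · simpa using hy (Pi.single j 1)

theorem LinearMap.exists_smul_add_smul_apply_eq_zero [IsAlgClosed k] {V U : Type*}
    [AddCommGroup V] [Module k V] [AddCommGroup U] [Module k U]
    [FiniteDimensional k V] [FiniteDimensional k U] [Nontrivial V]
    (hdim : finrank k U ≤ finrank k V) (A B : V →ₗ[k] U) :
    ∃ s t : k, (s ≠ 0 ∨ t ≠ 0) ∧ ∃ x ≠ 0, s • A x + t • B x = 0 := by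
  by_cases hB : Function.Injective B
  · let eB : V ≃ₗ[k] U := B.linearEquivOfInjective hB
      (le_antisymm (LinearMap.finrank_le_finrank_of_injective hB) hdim)
    obtain ⟨t, ht⟩ := Module.End.exists_eigenvalue (eB.symm.toLinearMap ∘ₗ A)
    obtain ⟨x, hx⟩ := ht.exists_hasEigenvector
    have hAx : A x = t • B x := by
      simpa [eB, LinearEquiv.symm_apply_eq] using hx.apply_eq_smul
    exact ⟨1, -t, Or.inl one_ne_zero, x, hx.2, by simp [hAx]⟩
  · obtain ⟨x, hx, hx0⟩ : ∃ x, B x = 0 ∧ x ≠ 0 := by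
      simpa [injective_iff_map_eq_zero] using hB
    exact ⟨0, 1, Or.inr one_ne_zero, x, hx0, by simp [hx]⟩

namespace MvPolynomial

variable {σ : Type*} [Fintype σ] {q : MvPolynomial σ k}

theorem IsHomogeneous.eval_add_of_two (hq : q.IsHomogeneous 2) (v w : σ → k) :
    eval (v + w) q = eval v q + eval w q + ∑ j, w j * eval v (pderiv j q) := by
  classical
  rw [q.as_sum]
  refine Finset.sum_induction _ (fun p => eval (v + w) p = eval v p + eval w p
    + ∑ j, w j * eval v (pderiv j p)) (fun p r hp hr => ?_) (by simp) fun d hd => ?_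
  · simp only [map_add, hp, hr, mul_add, Finset.sum_add_distrib]
    ring
  · obtain ⟨a, b, rfl⟩ := Finsupp.exists_eq_single_add_single_of_weight_one_eq_two
      (hq (mem_support_iff.mp hd))
    rw [monomial_add_single, pow_one, ← C_mul_X_eq_monomial]
    simp only [eval_C, eval_X, Pi.add_apply, pderiv_mul, pderiv_X, pderiv_C, Pi.single_apply,
      apply_ite (eval v), map_zero, map_add, map_mul, zero_mul, mul_zero, zero_add, mul_ite,
      ite_mul, mul_one, mul_add, Finset.sum_add_distrib, Finset.sum_ite_eq, Finset.mem_univ,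
      if_true]
    ring

variable [DecidableEq σ]

/-- For a quadratic form `q`, the Gram matrix of its polar form `q(v + w) - q(v) - q(w)`. -/
noncomputable def polarMatrix (q : MvPolynomial σ k) : Matrix σ σ k :=
  Matrix.of fun j i => eval (Pi.single j 1) (pderiv i q)

/-- The polarization identity is symmetric in `v` and `w`, which makes `∇q(v)` linear in `v`. -/
theorem IsHomogeneous.polarMatrix_mulVec (hq : q.IsHomogeneous 2) (v : σ → k) :
    polarMatrix q *ᵥ v = fun j => eval v (pderiv j q) := by
  funext j
  have hvw := hq.eval_add_of_two v (Pi.single j 1)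
  have hwv := hq.eval_add_of_two (Pi.single j 1) v
  rw [add_comm, hvw] at hwv
  simp only [Pi.single_apply, ite_mul, one_mul, zero_mul, Finset.sum_ite_eq',
    Finset.mem_univ, if_true] at hwv
  simp only [mulVec, dotProduct, polarMatrix, of_apply, mul_comm _ (v _)]
  linear_combination -hwv

theorem IsHomogeneous.polarMatrix_mulVec_mem_orthogonal (hq : q.IsHomogeneous 2)
    {W : Submodule k (σ → k)} (hW : ∀ v ∈ W, eval v q = 0) {x : σ → k} (hx : x ∈ W) :
    polarMatrix q *ᵥ x ∈ LinearMap.BilinForm.orthogonal (dotProductBilin k k) W := by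
  intro w hw
  have hpolar := hq.eval_add_of_two x w
  rw [hW x hx, hW w hw, hW _ (W.add_mem hx hw), zero_add, zero_add] at hpolar
  simp [hq.polarMatrix_mulVec, dotProduct, hpolar]

theorem exists_singular_point_of_forall_mem_eval_eq_zero [IsAlgClosed k]
    {q₁ q₂ : MvPolynomial σ k} (h₁ : q₁.IsHomogeneous 2) (h₂ : q₂.IsHomogeneous 2)
    (W : Submodule k (σ → k)) (hW : Fintype.card σ ≤ 2 * finrank k W) (hW₀ : 0 < finrank k W)
    (hvan : ∀ v ∈ W, eval v q₁ = 0 ∧ eval v q₂ = 0) :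
    ∃ v : σ → k, v ≠ 0 ∧ eval v q₁ = 0 ∧ eval v q₂ = 0 ∧
      (Matrix.of fun (i : Fin 2) (j : σ) => eval v (pderiv j (![q₁, q₂] i))).rank ≤ 1 := by
  have : Nontrivial W := Module.nontrivial_of_finrank_pos hW₀
  set U := LinearMap.BilinForm.orthogonal (dotProductBilin k k) W
  have hU : finrank k U ≤ finrank k W := by
    rw [LinearMap.BilinForm.finrank_orthogonal (Matrix.dotProductBilin_nondegenerate σ),
      Module.finrank_fintype_fun_eq_card]
    omega
  let A : W →ₗ[k] U := (polarMatrix q₁).mulVecLin.restrict fun _ hx =>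
    h₁.polarMatrix_mulVec_mem_orthogonal (fun v hv => (hvan v hv).1) hx
  let B : W →ₗ[k] U := (polarMatrix q₂).mulVecLin.restrict fun _ hx =>
    h₂.polarMatrix_mulVec_mem_orthogonal (fun v hv => (hvan v hv).2) hx
  obtain ⟨s, t, hst, x, hx0, hx⟩ := LinearMap.exists_smul_add_smul_apply_eq_zero hU A B
  refine ⟨x, by simpa using hx0, (hvan x x.2).1, (hvan x x.2).2,
    rank_le_one_of_smul_add_smul_eq_zero _ hst ?_⟩
  change s • (fun j => eval (x : σ → k) (pderiv j q₁))
    + t • (fun j => eval (x : σ → k) (pderiv j q₂)) = 0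
  rw [← h₁.polarMatrix_mulVec, ← h₂.polarMatrix_mulVec]
  exact congrArg Subtype.val hx

end MvPolynomial

end

theorem stmt_3_general (k : Type*) [Field k] [IsAlgClosed k]
    (q1 q2 : MvPolynomial (Fin 6) k)
    (h1 : q1.IsHomogeneous 2) (h2 : q2.IsHomogeneous 2)
    (hns : ¬ ∃ v : Fin 6 → k, v ≠ 0 ∧ eval v q1 = 0 ∧ eval v q2 = 0 ∧
      (Matrix.of fun (i : Fin 2) (j : Fin 6) =>
        eval v (pderiv j (![q1, q2] i))).rank ≤ 1) :
    ¬ ∃ W : Submodule k (Fin 6 → k), Module.finrank k W = 3 ∧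
      ∀ v ∈ W, eval v q1 = 0 ∧ eval v q2 = 0 := by
  rintro ⟨W, hW, hvan⟩
  exact hns (exists_singular_point_of_forall_mem_eval_eq_zero h1 h2 W (by simp [hW])
    (by simp [hW]) hvan)

/-- a nonsingular intersection of two quadrics in P^5
(characteristic 2) contains no plane. -/
theorem stmt_3 (k : Type*) [Field k] [IsAlgClosed k] [CharP k 2]
    (q1 q2 : MvPolynomial (Fin 6) k)
    (h1 : q1.IsHomogeneous 2) (h2 : q2.IsHomogeneous 2)
    (hns : ¬ ∃ v : Fin 6 → k, v ≠ 0 ∧ eval v q1 = 0 ∧ eval v q2 = 0 ∧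
      (Matrix.of fun (i : Fin 2) (j : Fin 6) =>
        eval v (pderiv j (![q1, q2] i))).rank ≤ 1) :
    ¬ ∃ W : Submodule k (Fin 6 → k), Module.finrank k W = 3 ∧
      ∀ v ∈ W, eval v q1 = 0 ∧ eval v q2 = 0 :=
  stmt_3_general k q1 q2 h1 h2 hns
end

section
/- Let k be an algebraically closed field of characteristic 2, let a_1, a_2, a_3 ∈ k be pairwise distinct, and let c_1,c_2,c_3,d_1,d_2,d_3 ∈ k. In k[X_1,X_2,X_3,Y_1,Y_2,Y_3] set Q_1 = X_1Y_1 + X_2Y_2 + X_3Y_3 and Q_2 = Σ_{i=1}^{3} (a_i X_iY_i + c_i X_i² + d_i Y_i²). Then there exists a nonzero vector v ∈ k^6 with Q_1(v) = Q_2(v) = 0 at which the 2×6 Jacobian matrix of (Q_1,Q_2) has rank at most 1, if and only if c_1 c_2 c_3 d_1 d_2 d_3 = 0. -/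
open MvPolynomial

/-- The Grassmannian quadric `Q₁ = X₁Y₁ + X₂Y₂ + X₃Y₃`; coordinates
`(X₁,X₂,X₃,Y₁,Y₂,Y₃) = (X 0, X 1, X 2, X 3, X 4, X 5)`. -/
noncomputable def Q1p (k : Type*) [Field k] : MvPolynomial (Fin 6) k :=
  X 0 * X 3 + X 1 * X 4 + X 2 * X 5

/-- The quadric `Q₂ = Σ (aᵢ XᵢYᵢ + cᵢ Xᵢ² + dᵢ Yᵢ²)` of case (a). -/
noncomputable def Q2a (k : Type*) [Field k] (a1 a2 a3 c1 c2 c3 d1 d2 d3 : k) :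
    MvPolynomial (Fin 6) k :=
  C a1 * (X 0 * X 3) + C a2 * (X 1 * X 4) + C a3 * (X 2 * X 5)
    + C c1 * X 0 ^ 2 + C c2 * X 1 ^ 2 + C c3 * X 2 ^ 2
    + C d1 * X 3 ^ 2 + C d2 * X 4 ^ 2 + C d3 * X 5 ^ 2

set_option maxHeartbeats 1000000 in
/-- The Jacobian matrix, computed explicitly (char 2 kills the square terms). -/
lemma evalA (k : Type*) [Field k] [CharP k 2] (a1 a2 a3 c1 c2 c3 d1 d2 d3 : k)
    (v : Fin 6 → k) :
    (Matrix.of fun (i : Fin 2) (j : Fin 6) =>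
        eval v (pderiv j (![Q1p k, Q2a k a1 a2 a3 c1 c2 c3 d1 d2 d3] i)))
      = Matrix.of ![![v 3, v 4, v 5, v 0, v 1, v 2],
          ![a1 * v 3, a2 * v 4, a3 * v 5, a1 * v 0, a2 * v 1, a3 * v 2]] := by
  ext i j
  fin_cases i <;> fin_cases j <;>
    simp [Q1p, Q2a, pderiv_X, Pi.single_apply, pow_two, Matrix.cons_val_succ,
      CharTwo.two_eq_zero] <;>
    first
      | rfl
      | (right; exact CharTwo.add_self_eq_zero _)
      | (rw [CharTwo.add_self_eq_zero, mul_zero, add_zero]; rfl)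

/-- All 2×2 minors of a matrix of rank ≤ 1 vanish. -/
lemma minor_zero {k : Type*} [Field k] {A : Matrix (Fin 2) (Fin 6) k} (h : A.rank ≤ 1)
    (p q : Fin 6) : A 0 p * A 1 q - A 0 q * A 1 p = 0 := by
  by_contra hne
  set B : Matrix (Fin 2) (Fin 2) k := Matrix.of ![![A 0 p, A 0 q], ![A 1 p, A 1 q]] with hB
  have hdet : B.det ≠ 0 := by
    simpa [hB, Matrix.det_fin_two] using hne
  have hU : IsUnit B := (Matrix.isUnit_iff_isUnit_det B).mpr hdet.isUnit
  have h2 : B.rank = 2 := by simpa using Matrix.rank_of_isUnit B hU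
  have hE : B = A * (Matrix.of fun (j : Fin 6) (l : Fin 2) =>
      if j = ![p, q] l then (1 : k) else 0) := by
    ext i l
    have : (A * (Matrix.of fun (j : Fin 6) (l : Fin 2) =>
        if j = ![p, q] l then (1 : k) else 0)) i l = A i (![p, q] l) := by
      simp [Matrix.mul_apply, mul_ite, mul_one, mul_zero]
    rw [this]
    fin_cases i <;> fin_cases l <;> simp [hB]
  have hle : B.rank ≤ A.rank := hE ▸ Matrix.rank_mul_le_left A _
  have hA1 : A.rank ≤ 1 := h
  omega

/-- A 2×6 matrix whose second row is a multiple of the first has rank ≤ 1. -/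
lemma rank_le_one_of_rows {k : Type*} [Field k] (A : Matrix (Fin 2) (Fin 6) k) (c : k)
    (h : ∀ j, A 1 j = c * A 0 j) : A.rank ≤ 1 := by
  have hA : A = (Matrix.of ![![(1 : k)], ![c]]) * (Matrix.of ![A 0]) := by
    ext i j
    fin_cases i <;> simp [Matrix.mul_apply, Fin.sum_univ_one, h]
  have h1 : A.rank ≤ (Matrix.of ![A 0] : Matrix (Fin 1) (Fin 6) k).rank := by
    conv_lhs => rw [hA]
    exact Matrix.rank_mul_le_right (Matrix.of ![![(1 : k)], ![c]]) (Matrix.of ![A 0])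
  have h2 : (Matrix.of ![A 0] : Matrix (Fin 1) (Fin 6) k).rank ≤ 1 := by
    simpa using Matrix.rank_le_card_height (R := k) (Matrix.of ![A 0])
  omega

lemma prod_zero {k : Type*} [Field k] {a b x y : k} (hab : a ≠ b)
    (h : x * (b * y) - y * (a * x) = 0) : x * y = 0 := by
  have h' : (b - a) * (x * y) = 0 := by linear_combination h
  exact (mul_eq_zero.mp h').resolve_left (sub_ne_zero.mpr hab.symm)

/-- singularity criterion for the intersection of two quadrics,
ordinary case (Lemma 3.2 (a)). -/
theorem stmt_4 (k : Type*) [Field k] [IsAlgClosed k] [CharP k 2]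
    (a1 a2 a3 c1 c2 c3 d1 d2 d3 : k)
    (h12 : a1 ≠ a2) (h13 : a1 ≠ a3) (h23 : a2 ≠ a3) :
    (∃ v : Fin 6 → k, v ≠ 0 ∧
        eval v (Q1p k) = 0 ∧ eval v (Q2a k a1 a2 a3 c1 c2 c3 d1 d2 d3) = 0 ∧
        (Matrix.of fun (i : Fin 2) (j : Fin 6) =>
          eval v (pderiv j (![Q1p k, Q2a k a1 a2 a3 c1 c2 c3 d1 d2 d3] i))).rank ≤ 1)
      ↔ c1 * c2 * c3 * d1 * d2 * d3 = 0 := by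
  constructor
  · rintro ⟨v, hv, hQ1, hQ2, hrank⟩
    rw [evalA k a1 a2 a3 c1 c2 c3 d1 d2 d3 v] at hrank
    simp only [Q1p, map_add, map_mul, eval_X] at hQ1
    simp only [Q2a, map_add, map_mul, map_pow, eval_C, eval_X] at hQ2
    -- the twelve cross-block products vanish
    have m01 : v 3 * v 4 = 0 :=
      prod_zero h12 (show v 3 * (a2 * v 4) - v 4 * (a1 * v 3) = 0 from minor_zero hrank 0 1)
    have m04 : v 3 * v 1 = 0 :=
      prod_zero h12 (show v 3 * (a2 * v 1) - v 1 * (a1 * v 3) = 0 from minor_zero hrank 0 4)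
    have m31 : v 0 * v 4 = 0 :=
      prod_zero h12 (show v 0 * (a2 * v 4) - v 4 * (a1 * v 0) = 0 from minor_zero hrank 3 1)
    have m34 : v 0 * v 1 = 0 :=
      prod_zero h12 (show v 0 * (a2 * v 1) - v 1 * (a1 * v 0) = 0 from minor_zero hrank 3 4)
    have m02 : v 3 * v 5 = 0 :=
      prod_zero h13 (show v 3 * (a3 * v 5) - v 5 * (a1 * v 3) = 0 from minor_zero hrank 0 2)
    have m05 : v 3 * v 2 = 0 :=
      prod_zero h13 (show v 3 * (a3 * v 2) - v 2 * (a1 * v 3) = 0 from minor_zero hrank 0 5)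
    have m32 : v 0 * v 5 = 0 :=
      prod_zero h13 (show v 0 * (a3 * v 5) - v 5 * (a1 * v 0) = 0 from minor_zero hrank 3 2)
    have m35 : v 0 * v 2 = 0 :=
      prod_zero h13 (show v 0 * (a3 * v 2) - v 2 * (a1 * v 0) = 0 from minor_zero hrank 3 5)
    have m12 : v 4 * v 5 = 0 :=
      prod_zero h23 (show v 4 * (a3 * v 5) - v 5 * (a2 * v 4) = 0 from minor_zero hrank 1 2)
    have m15 : v 4 * v 2 = 0 :=
      prod_zero h23 (show v 4 * (a3 * v 2) - v 2 * (a2 * v 4) = 0 from minor_zero hrank 1 5)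
    have m42 : v 1 * v 5 = 0 :=
      prod_zero h23 (show v 1 * (a3 * v 5) - v 5 * (a2 * v 1) = 0 from minor_zero hrank 4 2)
    have m45 : v 1 * v 2 = 0 :=
      prod_zero h23 (show v 1 * (a3 * v 2) - v 2 * (a2 * v 1) = 0 from minor_zero hrank 4 5)
    obtain ⟨j, hj⟩ := Function.ne_iff.mp hv
    simp only [Pi.zero_apply] at hj
    fin_cases j
    · -- v 0 ≠ 0 : c1 = 0
      have h1 : v 1 = 0 := (mul_eq_zero.mp m34).resolve_left hj
      have h4 : v 4 = 0 := (mul_eq_zero.mp m31).resolve_left hj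
      have h2 : v 2 = 0 := (mul_eq_zero.mp m35).resolve_left hj
      have h5 : v 5 = 0 := (mul_eq_zero.mp m32).resolve_left hj
      have h3 : v 3 = 0 := by
        have : v 0 * v 3 = 0 := by
          simpa [h1, h2, h4, h5] using hQ1
        exact (mul_eq_zero.mp this).resolve_left hj
      have hc : c1 * v 0 ^ 2 = 0 := by
        simpa [h1, h2, h3, h4, h5] using hQ2
      have : c1 = 0 :=
        (mul_eq_zero.mp hc).resolve_right (pow_ne_zero 2 hj)
      simp [this]
    · -- v 1 ≠ 0 : c2 = 0
      have h0 : v 0 = 0 := by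
        have := mul_comm (v 0) (v 1) ▸ m34
        exact (mul_eq_zero.mp m34).resolve_right hj
      have h3 : v 3 = 0 := (mul_eq_zero.mp m04).resolve_right hj
      have h2 : v 2 = 0 := (mul_eq_zero.mp m45).resolve_left hj
      have h5 : v 5 = 0 := (mul_eq_zero.mp m42).resolve_left hj
      have h4 : v 4 = 0 := by
        have : v 1 * v 4 = 0 := by
          simpa [h0, h2, h3, h5] using hQ1
        exact (mul_eq_zero.mp this).resolve_left hj
      have hc : c2 * v 1 ^ 2 = 0 := by
        simpa [h0, h2, h3, h4, h5] using hQ2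
      have : c2 = 0 :=
        (mul_eq_zero.mp hc).resolve_right (pow_ne_zero 2 hj)
      simp [this]
    · -- v 2 ≠ 0 : c3 = 0
      have h0 : v 0 = 0 := (mul_eq_zero.mp m35).resolve_right hj
      have h3 : v 3 = 0 := (mul_eq_zero.mp m05).resolve_right hj
      have h1 : v 1 = 0 := (mul_eq_zero.mp m45).resolve_right hj
      have h4 : v 4 = 0 := (mul_eq_zero.mp m15).resolve_right hj
      have h5 : v 5 = 0 := by
        have : v 2 * v 5 = 0 := by
          simpa [h0, h1, h3, h4] using hQ1
        exact (mul_eq_zero.mp this).resolve_left hj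
      have hc : c3 * v 2 ^ 2 = 0 := by
        simpa [h0, h1, h3, h4, h5] using hQ2
      have : c3 = 0 :=
        (mul_eq_zero.mp hc).resolve_right (pow_ne_zero 2 hj)
      simp [this]
    · -- v 3 ≠ 0 : d1 = 0
      have h1 : v 1 = 0 := (mul_eq_zero.mp m04).resolve_left hj
      have h4 : v 4 = 0 := (mul_eq_zero.mp m01).resolve_left hj
      have h2 : v 2 = 0 := (mul_eq_zero.mp m05).resolve_left hj
      have h5 : v 5 = 0 := (mul_eq_zero.mp m02).resolve_left hj
      have h0 : v 0 = 0 := by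
        have : v 0 * v 3 = 0 := by
          simpa [h1, h2, h4, h5] using hQ1
        exact (mul_eq_zero.mp this).resolve_right hj
      have hc : d1 * v 3 ^ 2 = 0 := by
        simpa [h0, h1, h2, h4, h5] using hQ2
      have : d1 = 0 :=
        (mul_eq_zero.mp hc).resolve_right (pow_ne_zero 2 hj)
      simp [this]
    · -- v 4 ≠ 0 : d2 = 0
      have h0 : v 0 = 0 := (mul_eq_zero.mp m31).resolve_right hj
      have h3 : v 3 = 0 := (mul_eq_zero.mp m01).resolve_right hj
      have h2 : v 2 = 0 := (mul_eq_zero.mp m15).resolve_left hj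
      have h5 : v 5 = 0 := (mul_eq_zero.mp m12).resolve_left hj
      have h1 : v 1 = 0 := by
        have : v 1 * v 4 = 0 := by
          simpa [h0, h2, h3, h5] using hQ1
        exact (mul_eq_zero.mp this).resolve_right hj
      have hc : d2 * v 4 ^ 2 = 0 := by
        simpa [h0, h1, h2, h3, h5] using hQ2
      have : d2 = 0 :=
        (mul_eq_zero.mp hc).resolve_right (pow_ne_zero 2 hj)
      simp [this]
    · -- v 5 ≠ 0 : d3 = 0
      have h0 : v 0 = 0 := (mul_eq_zero.mp m32).resolve_right hj
      have h3 : v 3 = 0 := (mul_eq_zero.mp m02).resolve_right hj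
      have h1 : v 1 = 0 := (mul_eq_zero.mp m42).resolve_right hj
      have h4 : v 4 = 0 := (mul_eq_zero.mp m12).resolve_right hj
      have h2 : v 2 = 0 := by
        have : v 2 * v 5 = 0 := by
          simpa [h0, h1, h3, h4] using hQ1
        exact (mul_eq_zero.mp this).resolve_right hj
      have hc : d3 * v 5 ^ 2 = 0 := by
        simpa [h0, h1, h2, h3, h4] using hQ2
      have : d3 = 0 :=
        (mul_eq_zero.mp hc).resolve_right (pow_ne_zero 2 hj)
      simp [this]
  · intro h
    simp only [mul_eq_zero] at h
    rcases h with ((((hc1 | hc2) | hc3) | hd1) | hd2) | hd3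
    · refine ⟨fun j => if j = 0 then 1 else 0, ?_, ?_, ?_, ?_⟩
      · intro hcon; simpa using congrFun hcon 0
      · simp [Q1p]
      · simp [Q2a, hc1]
      · rw [evalA k a1 a2 a3 c1 c2 c3 d1 d2 d3]
        exact rank_le_one_of_rows _ a1 (by intro j; fin_cases j <;> simp <;> first | exact (mul_zero _).symm | exact (mul_one _).symm | rfl)
    · refine ⟨fun j => if j = 1 then 1 else 0, ?_, ?_, ?_, ?_⟩
      · intro hcon; simpa using congrFun hcon 1
      · simp [Q1p]
      · simp [Q2a, hc2]
      · rw [evalA k a1 a2 a3 c1 c2 c3 d1 d2 d3]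
        exact rank_le_one_of_rows _ a2 (by intro j; fin_cases j <;> simp <;> first | exact (mul_zero _).symm | exact (mul_one _).symm | rfl)
    · refine ⟨fun j => if j = 2 then 1 else 0, ?_, ?_, ?_, ?_⟩
      · intro hcon; simpa using congrFun hcon 2
      · simp [Q1p]
      · simp [Q2a, hc3]
      · rw [evalA k a1 a2 a3 c1 c2 c3 d1 d2 d3]
        exact rank_le_one_of_rows _ a3 (by intro j; fin_cases j <;> simp <;> first | exact (mul_zero _).symm | exact (mul_one _).symm | rfl)
    · refine ⟨fun j => if j = 3 then 1 else 0, ?_, ?_, ?_, ?_⟩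
      · intro hcon; simpa using congrFun hcon 3
      · simp [Q1p]
      · simp [Q2a, hd1]
      · rw [evalA k a1 a2 a3 c1 c2 c3 d1 d2 d3]
        exact rank_le_one_of_rows _ a1 (by intro j; fin_cases j <;> simp <;> first | exact (mul_zero _).symm | exact (mul_one _).symm | rfl)
    · refine ⟨fun j => if j = 4 then 1 else 0, ?_, ?_, ?_, ?_⟩
      · intro hcon; simpa using congrFun hcon 4
      · simp [Q1p]
      · simp [Q2a, hd2]
      · rw [evalA k a1 a2 a3 c1 c2 c3 d1 d2 d3]
        exact rank_le_one_of_rows _ a2 (by intro j; fin_cases j <;> simp <;> first | exact (mul_zero _).symm | exact (mul_one _).symm | rfl)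
    · refine ⟨fun j => if j = 5 then 1 else 0, ?_, ?_, ?_, ?_⟩
      · intro hcon; simpa using congrFun hcon 5
      · simp [Q1p]
      · simp [Q2a, hd3]
      · rw [evalA k a1 a2 a3 c1 c2 c3 d1 d2 d3]
        exact rank_le_one_of_rows _ a3 (by intro j; fin_cases j <;> simp <;> first | exact (mul_zero _).symm | exact (mul_one _).symm | rfl)
end

section
/- Let k be an algebraically closed field of characteristic 2, let a_1 ≠ a_2 in k, and let b_1,b_2,b_3,b_4,c_1,c_2,c_3,d_1,d_2,d_3 ∈ k with b_1b_2 = b_3b_4 and (b_1,b_2,b_3,b_4) ≠ (0,0,0,0). In k[X_1,X_2,X_3,Y_1,Y_2,Y_3] set Q_1 = X_1Y_1 + X_2Y_2 + X_3Y_3 and Q_2 = a_1X_1Y_1 + a_2(X_2Y_2 + X_3Y_3) + Σ_{i=1}^{3}(c_iX_i² + d_iY_i²) + b_1X_2Y_3 + b_2X_3Y_2 + b_3X_2X_3 + b_4Y_2Y_3. Then there exists a nonzero vector v ∈ k^6 with Q_1(v) = Q_2(v) = 0 at which the 2×6 Jacobian matrix of (Q_1,Q_2) has rank at most 1, if and only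 if c_1 d_1 = 0 or b_2b_4c_2 + b_1b_4c_3 + b_1b_3d_2 + b_2b_3d_3 = 0. -/
/-!
Write `v = (x₁, x₂, x₃, y₁, y₂, y₃)` and `w = (x₂, x₃, y₂, y₃)`. As `∇Q₁(v)` is a permutation
of `v ≠ 0`, the rank condition says `∇Q₂(v) = t ∇Q₁(v)` for some `t`. In characteristic two this
reads `(a₁ - t) x₁ = (a₁ - t) y₁ = 0` and `B w = (t - a₂) w`, where `B` collects the `bᵢ`-terms,
and `b₁b₂ = b₃b₄` gives `B² = 0`. So either `w = 0`, and then `x₁y₁ = c₁x₁² + d₁y₁² = 0` forces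
`c₁d₁ = 0`; or `t = a₂ ≠ a₁`, so `x₁ = y₁ = 0`, `B w = 0`, and what is left of `Q₁ = Q₂ = 0` is
`x₂y₂ + x₃y₃ = 0` and `S(w) = c₂x₂² + c₃x₃² + d₂y₂² + d₃y₃² = 0`.

For such `w` the vector of squares `(x₂², x₃², y₂², y₃²)` is proportional to
`β = (b₂b₄, b₁b₄, b₁b₃, b₂b₃)`, and `S(w)` resp. `b₂b₄c₂ + b₁b₄c₃ + b₁b₃d₂ + b₂b₃d₃` are the
pairings of these two vectors with `(c₂, c₃, d₂, d₃)`; hence the criterion. Conversely, writing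
`bᵢ = pᵢ²`, the vector `w = (p₂p₄, p₁p₄, p₁p₃, p₂p₃)` is a witness when `β ≠ 0`; when `β = 0` at
most one `bᵢ` is nonzero and two coordinates of `w` are free.
-/

open MvPolynomial

/-- The quadric `Q₂` of case (b) (2-rank one case). -/
noncomputable def Q2b (k : Type*) [Field k]
    (a1 a2 b1 b2 b3 b4 c1 c2 c3 d1 d2 d3 : k) : MvPolynomial (Fin 6) k :=
  C a1 * (X 0 * X 3) + C a2 * (X 1 * X 4 + X 2 * X 5)
    + C c1 * X 0 ^ 2 + C c2 * X 1 ^ 2 + C c3 * X 2 ^ 2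
    + C d1 * X 3 ^ 2 + C d2 * X 4 ^ 2 + C d3 * X 5 ^ 2
    + C b1 * (X 1 * X 5) + C b2 * (X 2 * X 4) + C b3 * (X 1 * X 2) + C b4 * (X 4 * X 5)

section SingularPoint

variable {K : Type*} [Field K]

theorem Matrix.rank_le_one_iff_of_row_zero_ne_zero {n : Type*} [Fintype n]
    {M : Matrix (Fin 2) n K} (h : M 0 ≠ 0) : M.rank ≤ 1 ↔ ∃ t : K, M 1 = t • M 0 := by
  have hrange : Set.range M.row = {M 0, M 1} := by
    ext u
    simp only [Set.mem_range, Fin.exists_fin_two, Set.mem_insert_iff, Set.mem_singleton_iff,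
      eq_comm]
    rfl
  have hspan : Module.finrank K (Submodule.span K {M 0}) = 1 := finrank_span_singleton h
  rw [Matrix.rank_eq_finrank_span_row, hrange]
  constructor
  · intro hle
    have heq : Submodule.span K {M 0} = Submodule.span K {M 0, M 1} :=
      Submodule.eq_of_le_of_finrank_le (Submodule.span_mono (by simp)) (by omega)
    obtain ⟨t, ht⟩ := Submodule.mem_span_singleton.1
      (heq ▸ Submodule.subset_span (by simp) : M 1 ∈ Submodule.span K {M 0})
    exact ⟨t, ht.symm⟩
  · rintro ⟨t, ht⟩
    rw [ht, Set.pair_comm, Submodule.span_insert_eq_span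
      (Submodule.smul_mem _ _ (Submodule.mem_span_singleton_self _)), hspan]

def IsSingularPoint {σ : Type*} [Fintype σ] (P Q : MvPolynomial σ K) (v : σ → K) : Prop :=
  v ≠ 0 ∧ eval v P = 0 ∧ eval v Q = 0 ∧
    (Matrix.of fun (i : Fin 2) (j : σ) => eval v (pderiv j (![P, Q] i))).rank ≤ 1

theorem isSingularPoint_iff {σ : Type*} [Fintype σ] {P Q : MvPolynomial σ K} {v : σ → K}
    (hP : v ≠ 0 → (fun j => eval v (pderiv j P)) ≠ 0) :
    IsSingularPoint P Q v ↔ v ≠ 0 ∧ eval v P = 0 ∧ eval v Q = 0 ∧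
      ∃ t : K, ∀ j, eval v (pderiv j Q) = t * eval v (pderiv j P) := by
  refine and_congr_right fun hv => and_congr_right' <| and_congr_right' ?_
  rw [Matrix.rank_le_one_iff_of_row_zero_ne_zero (hP hv)]
  simp [funext_iff]

end SingularPoint

section Quadrics

variable {k : Type*} [Field k] {a1 a2 b1 b2 b3 b4 c1 c2 c3 d1 d2 d3 x1 x2 x3 y1 y2 y3 : k}

theorem eigenvalue_eq_zero_or_eigenvector_eq_zero [CharP k 2] (hb : b1 * b2 = b3 * b4) {μ : k}
    (h1 : b1 * y3 + b3 * x3 = μ * y2) (h2 : b2 * y2 + b3 * x2 = μ * y3)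
    (h3 : b2 * x3 + b4 * y3 = μ * x2) (h4 : b1 * x2 + b4 * y2 = μ * x3) :
    μ = 0 ∨ (x2 = 0 ∧ x3 = 0 ∧ y2 = 0 ∧ y3 = 0) := by
  have ex2 : μ ^ 2 * x2 = 0 := by
    linear_combination (norm := ring_nf) μ * h3 + b2 * h4 + b4 * h2 + x2 * hb
    reduce_mod_char!
  have ex3 : μ ^ 2 * x3 = 0 := by
    linear_combination (norm := ring_nf) μ * h4 + b1 * h3 + b4 * h1 + x3 * hb
    reduce_mod_char!
  have ey2 : μ ^ 2 * y2 = 0 := by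
    linear_combination (norm := ring_nf) μ * h1 + b1 * h2 + b3 * h4 + y2 * hb
    reduce_mod_char!
  have ey3 : μ ^ 2 * y3 = 0 := by
    linear_combination (norm := ring_nf) μ * h2 + b2 * h1 + b3 * h3 + y3 * hb
    reduce_mod_char!
  refine or_iff_not_imp_left.2 fun hμ => ?_
  simp only [mul_eq_zero, pow_eq_zero_iff two_ne_zero, hμ, false_or] at ex2 ex3 ey2 ey3
  exact ⟨ex2, ex3, ey2, ey3⟩

theorem criterion_eq_zero_of_kernel [CharP k 2]
    (hw : ¬(x2 = 0 ∧ x3 = 0 ∧ y2 = 0 ∧ y3 = 0))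
    (h1 : b1 * y3 + b3 * x3 = 0) (h2 : b2 * y2 + b3 * x2 = 0)
    (h3 : b2 * x3 + b4 * y3 = 0) (h4 : b1 * x2 + b4 * y2 = 0)
    (hq : x2 * y2 + x3 * y3 = 0) (hS : c2 * x2 ^ 2 + c3 * x3 ^ 2 + d2 * y2 ^ 2 + d3 * y3 ^ 2 = 0) :
    b2 * b4 * c2 + b1 * b4 * c3 + b1 * b3 * d2 + b2 * b3 * d3 = 0 := by
  have r1 : b1 * x2 ^ 2 = b2 * x3 ^ 2 := by
    linear_combination (norm := ring_nf) x2 * h4 + x3 * h3 + b4 * hq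
    reduce_mod_char!
  have r2 : b1 * y3 ^ 2 = b2 * y2 ^ 2 := by
    linear_combination (norm := ring_nf) y3 * h1 + y2 * h2 + b3 * hq
    reduce_mod_char!
  have r3 : b3 * x2 ^ 2 = b4 * y3 ^ 2 := by
    linear_combination (norm := ring_nf) x2 * h2 + y3 * h3 + b2 * hq
    reduce_mod_char!
  have r4 : b3 * x3 ^ 2 = b4 * y2 ^ 2 := by
    linear_combination (norm := ring_nf) x3 * h1 + y2 * h4 + b1 * hq
    reduce_mod_char!
  set E := b2 * b4 * c2 + b1 * b4 * c3 + b1 * b3 * d2 + b2 * b3 * d3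
  -- `E • (x₂², x₃², y₂², y₃²) = S(w) • (b₂b₄, b₁b₄, b₁b₃, b₂b₃)`, read off from `r1`–`r4`
  have ex2 : E * x2 ^ 2 = 0 := by
    linear_combination b2 * b4 * hS + c3 * b4 * r1 + d2 * (b1 * r3 + b4 * r2) + d3 * b2 * r3
  have ex3 : E * x3 ^ 2 = 0 := by
    linear_combination b1 * b4 * hS - c2 * b4 * r1 + d2 * b1 * r4 + d3 * (b2 * r4 - b4 * r2)
  have ey2 : E * y2 ^ 2 = 0 := by
    linear_combination b1 * b3 * hS - c2 * (b1 * r3 + b4 * r2) - c3 * b1 * r4 - d3 * b3 * r2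
  have ey3 : E * y3 ^ 2 = 0 := by
    linear_combination b2 * b3 * hS - c2 * b2 * r3 - c3 * (b2 * r4 - b4 * r2) + d2 * b3 * r2
  by_contra hE
  simp only [mul_eq_zero, pow_eq_zero_iff two_ne_zero, hE, false_or] at ex2 ex3 ey2 ey3
  exact hw ⟨ex2, ex3, ey2, ey3⟩

theorem mul_eq_zero_of_mul_sq_add_mul_sq_eq_zero (hne : ¬(x1 = 0 ∧ y1 = 0))
    (hxy : x1 * y1 = 0) (h : c1 * x1 ^ 2 + d1 * y1 ^ 2 = 0) : c1 * d1 = 0 := by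
  rcases mul_eq_zero.1 hxy with rfl | rfl
  · have hy1 : y1 ≠ 0 := fun hy1 => hne ⟨rfl, hy1⟩
    have hd1 : d1 = 0 := by simpa [hy1] using h
    simp [hd1]
  · have hx1 : x1 ≠ 0 := fun hx1 => hne ⟨hx1, rfl⟩
    have hc1 : c1 = 0 := by simpa [hx1] using h
    simp [hc1]

theorem exists_ne_zero_mul_sq_add_mul_sq_eq_zero [IsAlgClosed k] [CharP k 2] (a b : k) :
    ∃ x y : k, ¬(x = 0 ∧ y = 0) ∧ a * x ^ 2 + b * y ^ 2 = 0 := by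
  rcases eq_or_ne a 0 with rfl | ha
  · exact ⟨1, 0, by simp, by ring⟩
  obtain ⟨x, hx⟩ := IsAlgClosed.exists_pow_nat_eq b two_pos
  obtain ⟨y, hy⟩ := IsAlgClosed.exists_pow_nat_eq a two_pos
  refine ⟨x, y, fun h => ha (by rw [← hy, h.2, zero_pow two_ne_zero]), ?_⟩
  rw [hx, hy, mul_comm, CharTwo.add_self_eq_zero]

theorem vec6_eq_zero_iff : ![x1, x2, x3, y1, y2, y3] = 0 ↔
    x1 = 0 ∧ x2 = 0 ∧ x3 = 0 ∧ y1 = 0 ∧ y2 = 0 ∧ y3 = 0 := by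
  simp only [Matrix.cons_eq_zero_iff, Matrix.zero_empty, and_true]

theorem eval_Q1p : eval ![x1, x2, x3, y1, y2, y3] (Q1p k) = x1 * y1 + x2 * y2 + x3 * y3 := by
  simp [Q1p]

theorem eval_Q2b :
    eval ![x1, x2, x3, y1, y2, y3] (Q2b k a1 a2 b1 b2 b3 b4 c1 c2 c3 d1 d2 d3) =
      a1 * (x1 * y1) + a2 * (x2 * y2 + x3 * y3) + c1 * x1 ^ 2 + c2 * x2 ^ 2 + c3 * x3 ^ 2
        + d1 * y1 ^ 2 + d2 * y2 ^ 2 + d3 * y3 ^ 2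
        + b1 * (x2 * y3) + b2 * (x3 * y2) + b3 * (x2 * x3) + b4 * (y2 * y3) := by
  simp [Q2b]

theorem eval_pderiv_Q1p (j : Fin 6) :
    eval ![x1, x2, x3, y1, y2, y3] (pderiv j (Q1p k)) = ![y1, y2, y3, x1, x2, x3] j := by
  fin_cases j <;> simp [Q1p, pderiv_X]

theorem eval_pderiv_Q2b [CharP k 2] (j : Fin 6) :
    eval ![x1, x2, x3, y1, y2, y3] (pderiv j (Q2b k a1 a2 b1 b2 b3 b4 c1 c2 c3 d1 d2 d3)) =
      ![a1 * y1, a2 * y2 + b1 * y3 + b3 * x3, a2 * y3 + b2 * y2 + b3 * x2,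
        a1 * x1, a2 * x2 + b2 * x3 + b4 * y3, a2 * x3 + b1 * x2 + b4 * y2] j := by
  fin_cases j <;> simp [Q2b, pderiv_X, CharTwo.two_eq_zero]

theorem isSingularPoint_Q1p_Q2b_iff [CharP k 2] :
    IsSingularPoint (Q1p k) (Q2b k a1 a2 b1 b2 b3 b4 c1 c2 c3 d1 d2 d3)
        ![x1, x2, x3, y1, y2, y3] ↔
      ¬(x1 = 0 ∧ x2 = 0 ∧ x3 = 0 ∧ y1 = 0 ∧ y2 = 0 ∧ y3 = 0) ∧
      x1 * y1 + x2 * y2 + x3 * y3 = 0 ∧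
      a1 * (x1 * y1) + a2 * (x2 * y2 + x3 * y3) + c1 * x1 ^ 2 + c2 * x2 ^ 2 + c3 * x3 ^ 2
        + d1 * y1 ^ 2 + d2 * y2 ^ 2 + d3 * y3 ^ 2
        + b1 * (x2 * y3) + b2 * (x3 * y2) + b3 * (x2 * x3) + b4 * (y2 * y3) = 0 ∧
      ∃ t : k, a1 * y1 = t * y1 ∧ a2 * y2 + b1 * y3 + b3 * x3 = t * y2 ∧
        a2 * y3 + b2 * y2 + b3 * x2 = t * y3 ∧ a1 * x1 = t * x1 ∧
        a2 * x2 + b2 * x3 + b4 * y3 = t * x2 ∧ a2 * x3 + b1 * x2 + b4 * y2 = t * x3 := by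
  have hgrad : (fun j => eval ![x1, x2, x3, y1, y2, y3] (pderiv j (Q1p k))) =
      ![y1, y2, y3, x1, x2, x3] := funext eval_pderiv_Q1p
  rw [isSingularPoint_iff, Ne, vec6_eq_zero_iff]
  · simp [eval_Q1p, eval_Q2b, eval_pderiv_Q1p, eval_pderiv_Q2b, Fin.forall_fin_succ]
  · rw [hgrad, Ne, vec6_eq_zero_iff, Ne, vec6_eq_zero_iff]
    tauto

theorem isSingularPoint_Q1p_Q2b_of_kernel [CharP k 2]
    (hw : ¬(x2 = 0 ∧ x3 = 0 ∧ y2 = 0 ∧ y3 = 0))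
    (h1 : b1 * y3 + b3 * x3 = 0) (h2 : b2 * y2 + b3 * x2 = 0)
    (h3 : b2 * x3 + b4 * y3 = 0) (h4 : b1 * x2 + b4 * y2 = 0)
    (hq : x2 * y2 + x3 * y3 = 0) (hS : c2 * x2 ^ 2 + c3 * x3 ^ 2 + d2 * y2 ^ 2 + d3 * y3 ^ 2 = 0) :
    IsSingularPoint (Q1p k) (Q2b k a1 a2 b1 b2 b3 b4 c1 c2 c3 d1 d2 d3) ![0, x2, x3, 0, y2, y3] :=
  isSingularPoint_Q1p_Q2b_iff.2 ⟨by tauto, by linear_combination hq,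
    by linear_combination a2 * hq + hS + x2 * h1 + y2 * h3,
    a2, by ring, by linear_combination h1, by linear_combination h2, by ring,
    by linear_combination h3, by linear_combination h4⟩

theorem criterion_of_isSingularPoint [CharP k 2] (h12 : a1 ≠ a2) (hb : b1 * b2 = b3 * b4)
    {v : Fin 6 → k} (hv : IsSingularPoint (Q1p k) (Q2b k a1 a2 b1 b2 b3 b4 c1 c2 c3 d1 d2 d3) v) :
    c1 * d1 = 0 ∨ b2 * b4 * c2 + b1 * b4 * c3 + b1 * b3 * d2 + b2 * b3 * d3 = 0 := by
  obtain ⟨x1, x2, x3, y1, y2, y3, rfl⟩ : ∃ x1 x2 x3 y1 y2 y3, v = ![x1, x2, x3, y1, y2, y3] :=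
    ⟨v 0, v 1, v 2, v 3, v 4, v 5, by ext i; fin_cases i <;> rfl⟩
  obtain ⟨hne, hQ1, hQ2, t, g1, g2, g3, g4, g5, g6⟩ := isSingularPoint_Q1p_Q2b_iff.1 hv
  have e1 : b1 * y3 + b3 * x3 = (t - a2) * y2 := by linear_combination g2
  have e2 : b2 * y2 + b3 * x2 = (t - a2) * y3 := by linear_combination g3
  have e3 : b2 * x3 + b4 * y3 = (t - a2) * x2 := by linear_combination g5
  have e4 : b1 * x2 + b4 * y2 = (t - a2) * x3 := by linear_combination g6
  rcases eigenvalue_eq_zero_or_eigenvector_eq_zero hb e1 e2 e3 e4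
    with ht | ⟨rfl, rfl, rfl, rfl⟩
  · obtain rfl : a2 = t := (sub_eq_zero.1 ht).symm
    have ha : a1 - a2 ≠ 0 := sub_ne_zero.2 h12
    have hy1 : (a1 - a2) * y1 = 0 := by linear_combination g1
    have hx1 : (a1 - a2) * x1 = 0 := by linear_combination g4
    obtain rfl : y1 = 0 := (mul_eq_zero.1 hy1).resolve_left ha
    obtain rfl : x1 = 0 := (mul_eq_zero.1 hx1).resolve_left ha
    have hw : ¬(x2 = 0 ∧ x3 = 0 ∧ y2 = 0 ∧ y3 = 0) := by tauto
    have hq : x2 * y2 + x3 * y3 = 0 := by linear_combination hQ1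
    have hS : c2 * x2 ^ 2 + c3 * x3 ^ 2 + d2 * y2 ^ 2 + d3 * y3 ^ 2 = 0 := by
      linear_combination hQ2 - a2 * hQ1 - x2 * e1 - y2 * e3
    simp only [sub_self, zero_mul] at e1 e2 e3 e4
    exact Or.inr <| criterion_eq_zero_of_kernel hw e1 e2 e3 e4 hq hS
  · have hne : ¬(x1 = 0 ∧ y1 = 0) := by tauto
    have hxy : x1 * y1 = 0 := by linear_combination hQ1
    have h : c1 * x1 ^ 2 + d1 * y1 ^ 2 = 0 := by linear_combination hQ2 - a1 * hQ1
    exact Or.inl <| mul_eq_zero_of_mul_sq_add_mul_sq_eq_zero hne hxy h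

theorem exists_isSingularPoint_of_mul_eq_zero [CharP k 2] (h : c1 * d1 = 0) :
    ∃ v, IsSingularPoint (Q1p k) (Q2b k a1 a2 b1 b2 b3 b4 c1 c2 c3 d1 d2 d3) v := by
  rcases mul_eq_zero.1 h with rfl | rfl
  · exact ⟨![1, 0, 0, 0, 0, 0], isSingularPoint_Q1p_Q2b_iff.2
      ⟨by simp, by ring, by ring, a1, by ring, by ring, by ring, by ring, by ring, by ring⟩⟩
  · exact ⟨![0, 0, 0, 1, 0, 0], isSingularPoint_Q1p_Q2b_iff.2
      ⟨by simp, by ring, by ring, a1, by ring, by ring, by ring, by ring, by ring, by ring⟩⟩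

theorem exists_isSingularPoint_of_generic [IsAlgClosed k] [CharP k 2] (hb : b1 * b2 = b3 * b4)
    (hβ : ¬(b2 * b4 = 0 ∧ b1 * b4 = 0 ∧ b1 * b3 = 0 ∧ b2 * b3 = 0))
    (hE : b2 * b4 * c2 + b1 * b4 * c3 + b1 * b3 * d2 + b2 * b3 * d3 = 0) :
    ∃ v, IsSingularPoint (Q1p k) (Q2b k a1 a2 b1 b2 b3 b4 c1 c2 c3 d1 d2 d3) v := by
  obtain ⟨p1, rfl⟩ := IsAlgClosed.exists_pow_nat_eq b1 two_pos
  obtain ⟨p2, rfl⟩ := IsAlgClosed.exists_pow_nat_eq b2 two_pos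
  obtain ⟨p3, rfl⟩ := IsAlgClosed.exists_pow_nat_eq b3 two_pos
  obtain ⟨p4, rfl⟩ := IsAlgClosed.exists_pow_nat_eq b4 two_pos
  have hp : p1 * p2 + p3 * p4 = 0 := by
    have : (p1 * p2 + p3 * p4) ^ 2 = 0 := by
      rw [CharTwo.add_sq, mul_pow, mul_pow, hb, CharTwo.add_self_eq_zero]
    exact pow_eq_zero_iff two_ne_zero |>.1 this
  refine ⟨_, isSingularPoint_Q1p_Q2b_of_kernel (x2 := p2 * p4) (x3 := p1 * p4) (y2 := p1 * p3)
    (y3 := p2 * p3) (fun h => hβ ?_) (by linear_combination p1 * p3 * hp)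
    (by linear_combination p2 * p3 * hp) (by linear_combination p2 * p4 * hp)
    (by linear_combination p1 * p4 * hp) ?_ (by linear_combination hE)⟩
  · simp only [← mul_pow, h, zero_pow two_ne_zero, and_self]
  · ring_nf
    reduce_mod_char!

theorem exists_isSingularPoint_of_degenerate [IsAlgClosed k] [CharP k 2]
    (hb : b1 * b2 = b3 * b4) (hβ : b2 * b4 = 0 ∧ b1 * b4 = 0 ∧ b1 * b3 = 0 ∧ b2 * b3 = 0) :
    ∃ v, IsSingularPoint (Q1p k) (Q2b k a1 a2 b1 b2 b3 b4 c1 c2 c3 d1 d2 d3) v := by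
  obtain ⟨h24, h14, h13, h23⟩ := hβ
  by_cases hb12 : b1 = 0 ∧ b2 = 0
  · obtain ⟨rfl, rfl⟩ := hb12
    rcases (by simpa using hb.symm : b3 = 0 ∨ b4 = 0) with rfl | rfl
    · obtain ⟨x, y, hxy, h⟩ := exists_ne_zero_mul_sq_add_mul_sq_eq_zero c2 c3
      exact ⟨_, isSingularPoint_Q1p_Q2b_of_kernel (x2 := x) (x3 := y) (y2 := 0) (y3 := 0)
        (by tauto) (by ring) (by ring) (by ring) (by ring) (by ring) (by linear_combination h)⟩
    · obtain ⟨x, y, hxy, h⟩ := exists_ne_zero_mul_sq_add_mul_sq_eq_zero d2 d3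
      exact ⟨_, isSingularPoint_Q1p_Q2b_of_kernel (x2 := 0) (x3 := 0) (y2 := x) (y3 := y)
        (by tauto) (by ring) (by ring) (by ring) (by ring) (by ring) (by linear_combination h)⟩
  · obtain ⟨rfl, rfl⟩ : b3 = 0 ∧ b4 = 0 := by
      rcases not_and_or.1 hb12 with h1 | h2
      · exact ⟨(mul_eq_zero.1 h13).resolve_left h1, (mul_eq_zero.1 h14).resolve_left h1⟩
      · exact ⟨(mul_eq_zero.1 h23).resolve_left h2, (mul_eq_zero.1 h24).resolve_left h2⟩
    rcases (by simpa using hb : b1 = 0 ∨ b2 = 0) with rfl | rfl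
    · obtain ⟨x, y, hxy, h⟩ := exists_ne_zero_mul_sq_add_mul_sq_eq_zero c2 d3
      exact ⟨_, isSingularPoint_Q1p_Q2b_of_kernel (x2 := x) (x3 := 0) (y2 := 0) (y3 := y)
        (by tauto) (by ring) (by ring) (by ring) (by ring) (by ring) (by linear_combination h)⟩
    · obtain ⟨x, y, hxy, h⟩ := exists_ne_zero_mul_sq_add_mul_sq_eq_zero c3 d2
      exact ⟨_, isSingularPoint_Q1p_Q2b_of_kernel (x2 := 0) (x3 := x) (y2 := y) (y3 := 0)
        (by tauto) (by ring) (by ring) (by ring) (by ring) (by ring) (by linear_combination h)⟩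

end Quadrics

theorem stmt_5_general (k : Type*) [Field k] [IsAlgClosed k] [CharP k 2]
    (a1 a2 b1 b2 b3 b4 c1 c2 c3 d1 d2 d3 : k)
    (h12 : a1 ≠ a2) (hb : b1 * b2 = b3 * b4) :
    (∃ v : Fin 6 → k, v ≠ 0 ∧
        eval v (Q1p k) = 0 ∧
        eval v (Q2b k a1 a2 b1 b2 b3 b4 c1 c2 c3 d1 d2 d3) = 0 ∧
        (Matrix.of fun (i : Fin 2) (j : Fin 6) =>
          eval v (pderiv j
            (![Q1p k, Q2b k a1 a2 b1 b2 b3 b4 c1 c2 c3 d1 d2 d3] i))).rank ≤ 1)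
      ↔ c1 * d1 = 0 ∨ b2*b4*c2 + b1*b4*c3 + b1*b3*d2 + b2*b3*d3 = 0 := by
  refine ⟨fun ⟨v, hv⟩ => criterion_of_isSingularPoint h12 hb hv, ?_⟩
  rintro (h | hE)
  · exact exists_isSingularPoint_of_mul_eq_zero h
  · by_cases hβ : b2 * b4 = 0 ∧ b1 * b4 = 0 ∧ b1 * b3 = 0 ∧ b2 * b3 = 0
    · exact exists_isSingularPoint_of_degenerate hb hβ
    · exact exists_isSingularPoint_of_generic hb hβ hE

/-- singularity criterion for the intersection of two quadrics,
2-rank one case (Lemma 3.2 (b)). -/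
theorem stmt_5 (k : Type*) [Field k] [IsAlgClosed k] [CharP k 2]
    (a1 a2 b1 b2 b3 b4 c1 c2 c3 d1 d2 d3 : k)
    (h12 : a1 ≠ a2) (hb : b1 * b2 = b3 * b4)
    (hb12 : ¬ (b1 = 0 ∧ b2 = 0 ∧ b3 = 0 ∧ b4 = 0)) :
    (∃ v : Fin 6 → k, v ≠ 0 ∧
        eval v (Q1p k) = 0 ∧
        eval v (Q2b k a1 a2 b1 b2 b3 b4 c1 c2 c3 d1 d2 d3) = 0 ∧
        (Matrix.of fun (i : Fin 2) (j : Fin 6) =>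
          eval v (pderiv j
            (![Q1p k, Q2b k a1 a2 b1 b2 b3 b4 c1 c2 c3 d1 d2 d3] i))).rank ≤ 1)
      ↔ c1 * d1 = 0 ∨ b2*b4*c2 + b1*b4*c3 + b1*b3*d2 + b2*b3*d3 = 0 :=
  stmt_5_general k a1 a2 b1 b2 b3 b4 c1 c2 c3 d1 d2 d3 h12 hb
end

section
/- Let k be an algebraically closed field of characteristic 2 and let a ∈ k. Suppose α_i, β_i, γ_i, δ_i ∈ k (i = 1,2,3) satisfy α_iδ_i + β_iγ_i = 1 for each i, and set b_1 = β_3γ_2, b_2 = α_2δ_3, b_3 = γ_2δ_3, b_4 = α_2β_3, b_5 = β_2γ_1, b_6 = α_1δ_2, b_7 = γ_1δ_2, b_8 = α_1β_2. Let c_1,c_2,c_3,d_1,d_2,d_3 ∈ k. In k[X_1,X_2,X_3,Y_1,Y_2,Y_3] set Q_1 = X_1Y_1 + X_2Y_2 + X_3Y_3 and Q_2 = a(X_1Y_1 + X_2Y_2 + X_3Y_3) + Σ_{i=1}^{3}(c_iX_i² + d_iY_i²) + b_1X_2Y_3 + b_2X_3Y_2 + b_3X_2X_3 + b_4Y_2Y_3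 + b_5X_1Y_2 + b_6X_2Y_1 + b_7X_1X_2 + b_8Y_1Y_2. Then there exists a nonzero vector v ∈ k^6 with Q_1(v) = Q_2(v) = 0 at which the 2×6 Jacobian matrix of (Q_1,Q_2) has rank at most 1, if and only if c_1(b_1b_8+b_4b_6)(b_2b_6+b_3b_8) + c_3(b_1b_5+b_4b_7)(b_1b_8+b_4b_6) + d_1(b_1b_5+b_4b_7)(b_2b_7+b_3b_5) + d_3(b_2b_6+b_3b_8)(b_2b_7+b_3b_5) = 0. -/
open MvPolynomial

/-- The quadric `Q₂` of case (c) (supersingular case). -/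
noncomputable def Q2c (k : Type*) [Field k]
    (a b1 b2 b3 b4 b5 b6 b7 b8 c1 c2 c3 d1 d2 d3 : k) : MvPolynomial (Fin 6) k :=
  C a * (X 0 * X 3 + X 1 * X 4 + X 2 * X 5)
    + C c1 * X 0 ^ 2 + C c2 * X 1 ^ 2 + C c3 * X 2 ^ 2
    + C d1 * X 3 ^ 2 + C d2 * X 4 ^ 2 + C d3 * X 5 ^ 2
    + C b1 * (X 1 * X 5) + C b2 * (X 2 * X 4) + C b3 * (X 1 * X 2) + C b4 * (X 4 * X 5)
    + C b5 * (X 0 * X 4) + C b6 * (X 1 * X 3) + C b7 * (X 0 * X 1) + C b8 * (X 3 * X 4)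

section AuxRank

lemma aux_rank_le_one {K : Type*} [Field K] {n : Type*} [Fintype n] (r : n → K) (a : K) :
    (Matrix.of ![r, a • r]).rank ≤ 1 := by
  classical
  have hrange : LinearMap.range (Matrix.of ![r, a • r]).mulVecLin ≤
      Submodule.span K {![1, a]} := by
    rintro y ⟨x, rfl⟩
    refine Submodule.mem_span_singleton.2 ⟨dotProduct r x, ?_⟩
    funext i
    fin_cases i <;>
      simp [Matrix.mulVecLin_apply, Matrix.mulVec, dotProduct, Finset.mul_sum,
        mul_comm, mul_left_comm]
  rw [Matrix.rank]
  refine le_trans (Submodule.finrank_mono hrange) ?_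
  simpa using finrank_span_le_card ({![1, a]} : Set (Fin 2 → K))

lemma aux_sub_le {K : Type*} [Field K] {m n l : Type*} [Fintype m] [Fintype n] [Fintype l]
    (f : l → m) (A : Matrix m n K) : (A.submatrix f id).rank ≤ A.rank := by
  rw [show A.submatrix f id = A.submatrix f (Equiv.refl n) from rfl]
  rw [Matrix.rank, Matrix.rank, Matrix.mulVecLin_submatrix, LinearMap.range_comp,
    LinearMap.range_comp,
    show LinearMap.funLeft K K (Equiv.refl n).symm
      = (LinearEquiv.funCongrLeft K K (Equiv.refl n).symm :
          (n → K) →ₗ[K] (n → K)) from rfl,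
    LinearEquiv.range, Submodule.map_top]
  exact Submodule.finrank_map_le _ _

lemma aux_minor {K : Type*} [Field K] {n : Type*} [Fintype n] (M : Matrix (Fin 2) n K)
    (h : M.rank ≤ 1) (j j' : n) : M 0 j * M 1 j' = M 0 j' * M 1 j := by
  classical
  by_contra hne
  have hdet : (M.transpose.submatrix ![j, j'] id).det ≠ 0 := by
    rw [Matrix.det_fin_two]
    simp only [Matrix.submatrix_apply, Matrix.transpose_apply, Matrix.cons_val_zero,
      Matrix.cons_val_one, Matrix.head_cons, id]
    intro hc
    exact hne (by linear_combination hc)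
  have h2 : (M.transpose.submatrix ![j, j'] id).rank = 2 := by
    rw [Matrix.rank_of_isUnit (n := Fin 2) _ ((Matrix.isUnit_iff_isUnit_det _).2 hdet.isUnit),
      Fintype.card_fin]
  have h3 := aux_sub_le ![j, j'] M.transpose
  rw [Matrix.rank_transpose, h2] at h3
  omega

end AuxRank

section AuxEval

variable {k : Type*} [Field k]

lemma evalQ1 (v : Fin 6 → k) :
    eval v (Q1p k) = v 0 * v 3 + v 1 * v 4 + v 2 * v 5 := by
  simp [Q1p]

lemma evalQ2 (a b1 b2 b3 b4 b5 b6 b7 b8 c1 c2 c3 d1 d2 d3 : k) (v : Fin 6 → k) :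
    eval v (Q2c k a b1 b2 b3 b4 b5 b6 b7 b8 c1 c2 c3 d1 d2 d3) =
      a * (v 0 * v 3 + v 1 * v 4 + v 2 * v 5)
        + c1 * v 0 ^ 2 + c2 * v 1 ^ 2 + c3 * v 2 ^ 2
        + d1 * v 3 ^ 2 + d2 * v 4 ^ 2 + d3 * v 5 ^ 2
        + b1 * (v 1 * v 5) + b2 * (v 2 * v 4) + b3 * (v 1 * v 2) + b4 * (v 4 * v 5)
        + b5 * (v 0 * v 4) + b6 * (v 1 * v 3) + b7 * (v 0 * v 1) + b8 * (v 3 * v 4) := by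
  simp [Q2c]

lemma dQ1 (v : Fin 6 → k) (j : Fin 6) :
    eval v (pderiv j (Q1p k)) = ![v 3, v 4, v 5, v 0, v 1, v 2] j := by
  fin_cases j <;> (simp [Q1p, pderiv_mul]; try rfl)

variable [CharP k 2]

set_option maxHeartbeats 1600000 in
lemma dQ2 (a b1 b2 b3 b4 b5 b6 b7 b8 c1 c2 c3 d1 d2 d3 : k) (v : Fin 6 → k) (j : Fin 6) :
    eval v (pderiv j (Q2c k a b1 b2 b3 b4 b5 b6 b7 b8 c1 c2 c3 d1 d2 d3)) =
      a * (![v 3, v 4, v 5, v 0, v 1, v 2] j) +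
      ![b5*v 4 + b7*v 1, b6*v 3 + b7*v 0 + b1*v 5 + b3*v 2, b2*v 4 + b3*v 1,
        b6*v 1 + b8*v 4, b8*v 3 + b5*v 0 + b4*v 5 + b2*v 2, b1*v 1 + b4*v 4] j := by
  have htwo : (2:k) = 0 := CharTwo.two_eq_zero
  fin_cases j
  · show _ = a * v 3 + (b5*v 4 + b7*v 1)
    simp [Q2c, pderiv_mul, pderiv_C_mul, pderiv_pow]; rw [htwo]; ring
  · show _ = a * v 4 + (b6*v 3 + b7*v 0 + b1*v 5 + b3*v 2)
    simp [Q2c, pderiv_mul, pderiv_C_mul, pderiv_pow]; rw [htwo]; ring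
  · show _ = a * v 5 + (b2*v 4 + b3*v 1)
    simp [Q2c, pderiv_mul, pderiv_C_mul, pderiv_pow]; rw [htwo]; ring
  · show _ = a * v 0 + (b6*v 1 + b8*v 4)
    simp [Q2c, pderiv_mul, pderiv_C_mul, pderiv_pow]; rw [htwo]; ring
  · show _ = a * v 1 + (b8*v 3 + b5*v 0 + b4*v 5 + b2*v 2)
    simp [Q2c, pderiv_mul, pderiv_C_mul, pderiv_pow]; rw [htwo]; ring
  · show _ = a * v 2 + (b1*v 1 + b4*v 4)
    simp [Q2c, pderiv_mul, pderiv_C_mul, pderiv_pow]; rw [htwo]; ring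

lemma pair_param {α γ x y : k} (hng : ¬(α = 0 ∧ γ = 0))
    (h : α * y + γ * x = 0) : ∃ s, x = α * s ∧ y = γ * s := by
  have htwo : (2:k) = 0 := CharTwo.two_eq_zero
  by_cases hα : α = 0
  · have hγ : γ ≠ 0 := fun hg => hng ⟨hα, hg⟩
    refine ⟨y / γ, ?_, ?_⟩
    · have hx : γ * x = 0 := by linear_combination h - y * hα
      rw [hα, zero_mul]
      exact (mul_eq_zero.1 hx).resolve_left hγ
    · field_simp
  · refine ⟨x / α, ?_, ?_⟩
    · field_simp
    · have key : α * y = γ * x := by linear_combination h - γ * x * htwo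
      field_simp
      linear_combination key

end AuxEval

/-- singularity criterion for the intersection of two quadrics,
supersingular case (Lemma 3.2 (c)). -/
theorem stmt_6 (k : Type*) [Field k] [IsAlgClosed k] [CharP k 2]
    (a : k) (al1 al2 al3 be1 be2 be3 ga1 ga2 ga3 de1 de2 de3 : k)
    (h1 : al1 * de1 + be1 * ga1 = 1) (h2 : al2 * de2 + be2 * ga2 = 1)
    (h3 : al3 * de3 + be3 * ga3 = 1)
    (b1 b2 b3 b4 b5 b6 b7 b8 : k)
    (hb1 : b1 = be3 * ga2) (hb2 : b2 = al2 * de3) (hb3 : b3 = ga2 * de3)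
    (hb4 : b4 = al2 * be3) (hb5 : b5 = be2 * ga1) (hb6 : b6 = al1 * de2)
    (hb7 : b7 = ga1 * de2) (hb8 : b8 = al1 * be2)
    (c1 c2 c3 d1 d2 d3 : k) :
    (∃ v : Fin 6 → k, v ≠ 0 ∧
        eval v (Q1p k) = 0 ∧
        eval v (Q2c k a b1 b2 b3 b4 b5 b6 b7 b8 c1 c2 c3 d1 d2 d3) = 0 ∧
        (Matrix.of fun (i : Fin 2) (j : Fin 6) =>
          eval v (pderiv j
            (![Q1p k, Q2c k a b1 b2 b3 b4 b5 b6 b7 b8 c1 c2 c3 d1 d2 d3] i))).rank ≤ 1)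
      ↔ c1 * ((b1*b8 + b4*b6) * (b2*b6 + b3*b8))
          + c3 * ((b1*b5 + b4*b7) * (b1*b8 + b4*b6))
          + d1 * ((b1*b5 + b4*b7) * (b2*b7 + b3*b5))
          + d3 * ((b2*b6 + b3*b8) * (b2*b7 + b3*b5)) = 0 := by
  subst hb1 hb2 hb3 hb4 hb5 hb6 hb7 hb8
  have htwo : (2:k) = 0 := CharTwo.two_eq_zero
  have hng1 : ¬(al1 = 0 ∧ ga1 = 0) := by
    rintro ⟨h, h'⟩; rw [h, h'] at h1; simp at h1
  have hng3 : ¬(be3 = 0 ∧ de3 = 0) := by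
    rintro ⟨h, h'⟩; rw [h, h'] at h3; simp at h3
  constructor
  · rintro ⟨v, hv0, hQ1, hQ2, hrank⟩
    rw [evalQ1] at hQ1
    rw [evalQ2] at hQ2
    have hm : ∀ j j' : Fin 6,
        eval v (pderiv j (Q1p k)) *
          eval v (pderiv j' (Q2c k a (be3*ga2) (al2*de3) (ga2*de3) (al2*be3) (be2*ga1)
            (al1*de2) (ga1*de2) (al1*be2) c1 c2 c3 d1 d2 d3)) =
        eval v (pderiv j' (Q1p k)) *
          eval v (pderiv j (Q2c k a (be3*ga2) (al2*de3) (ga2*de3) (al2*be3) (be2*ga1)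
            (al1*de2) (ga1*de2) (al1*be2) c1 c2 c3 d1 d2 d3)) :=
      fun j j' => aux_minor _ hrank j j'
    have hm' : ∀ j j' : Fin 6,
        (![be2*ga1*v 4 + ga1*de2*v 1,
           al1*de2*v 3 + ga1*de2*v 0 + be3*ga2*v 5 + ga2*de3*v 2,
           al2*de3*v 4 + ga2*de3*v 1,
           al1*de2*v 1 + al1*be2*v 4,
           al1*be2*v 3 + be2*ga1*v 0 + al2*be3*v 5 + al2*de3*v 2,
           be3*ga2*v 1 + al2*be3*v 4] j) * (![v 3, v 4, v 5, v 0, v 1, v 2] j')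
        = (![be2*ga1*v 4 + ga1*de2*v 1,
           al1*de2*v 3 + ga1*de2*v 0 + be3*ga2*v 5 + ga2*de3*v 2,
           al2*de3*v 4 + ga2*de3*v 1,
           al1*de2*v 1 + al1*be2*v 4,
           al1*be2*v 3 + be2*ga1*v 0 + al2*be3*v 5 + al2*de3*v 2,
           be3*ga2*v 1 + al2*be3*v 4] j') * (![v 3, v 4, v 5, v 0, v 1, v 2] j) := by
      intro j j'
      have h := hm j j'
      rw [dQ1 v j, dQ1 v j', dQ2 (v := v) (j := j), dQ2 (v := v) (j := j')] at h
      linear_combination -h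
    obtain ⟨j0, hj0⟩ : ∃ j : Fin 6, (![v 3, v 4, v 5, v 0, v 1, v 2] j) ≠ 0 := by
      by_contra hc
      push_neg at hc
      apply hv0
      funext i
      fin_cases i
      · exact hc 3
      · exact hc 4
      · exact hc 5
      · exact hc 0
      · exact hc 1
      · exact hc 2
    obtain ⟨lam, hL⟩ : ∃ lam : k, ∀ j : Fin 6,
        (![be2*ga1*v 4 + ga1*de2*v 1,
           al1*de2*v 3 + ga1*de2*v 0 + be3*ga2*v 5 + ga2*de3*v 2,
           al2*de3*v 4 + ga2*de3*v 1,
           al1*de2*v 1 + al1*be2*v 4,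
           al1*be2*v 3 + be2*ga1*v 0 + al2*be3*v 5 + al2*de3*v 2,
           be3*ga2*v 1 + al2*be3*v 4] j) = lam * (![v 3, v 4, v 5, v 0, v 1, v 2] j) := by
      refine ⟨(![be2*ga1*v 4 + ga1*de2*v 1,
           al1*de2*v 3 + ga1*de2*v 0 + be3*ga2*v 5 + ga2*de3*v 2,
           al2*de3*v 4 + ga2*de3*v 1,
           al1*de2*v 1 + al1*be2*v 4,
           al1*be2*v 3 + be2*ga1*v 0 + al2*be3*v 5 + al2*de3*v 2,
           be3*ga2*v 1 + al2*be3*v 4] j0) / (![v 3, v 4, v 5, v 0, v 1, v 2] j0),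
        fun j => ?_⟩
      rw [div_mul_eq_mul_div, eq_div_iff hj0]
      linear_combination hm' j j0
    have E0 : be2*ga1*v 4 + ga1*de2*v 1 = lam * v 3 := hL 0
    have E1 : al1*de2*v 3 + ga1*de2*v 0 + be3*ga2*v 5 + ga2*de3*v 2 = lam * v 4 := hL 1
    have E2 : al2*de3*v 4 + ga2*de3*v 1 = lam * v 5 := hL 2
    have E3 : al1*de2*v 1 + al1*be2*v 4 = lam * v 0 := hL 3
    have E4 : al1*be2*v 3 + be2*ga1*v 0 + al2*be3*v 5 + al2*de3*v 2 = lam * v 1 := hL 4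
    have E5 : be3*ga2*v 1 + al2*be3*v 4 = lam * v 2 := hL 5
    have hlp : lam * (al1 * v 3 + ga1 * v 0) = 0 := by
      linear_combination (-al1)*E0 + (-ga1)*E3 + al1*ga1*(be2*v 4 + de2*v 1)*htwo
    have hlq : lam * (be3 * v 5 + de3 * v 2) = 0 := by
      linear_combination (-be3)*E2 + (-de3)*E5 + be3*de3*(al2*v 4 + ga2*v 1)*htwo
    have hlw : lam * (de2 * v 1 + be2 * v 4) = be3 * v 5 + de3 * v 2 := by
      linear_combination (-de2)*E4 + (-be2)*E1 + be2*de2*(al1*v 3 + ga1*v 0)*htwo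
        + (be3*v 5 + de3*v 2)*h2
    have hlu : lam * (ga2 * v 1 + al2 * v 4) = al1 * v 3 + ga1 * v 0 := by
      linear_combination (-ga2)*E4 + (-al2)*E1 + al2*ga2*(be3*v 5 + de3*v 2)*htwo
        + (al1*v 3 + ga1*v 0)*h2
    by_cases hlam : lam = 0
    · rw [hlam, zero_mul] at E0 E1 E2 E3 E4 E5
      have hw0 : de2*v 1 + be2*v 4 = 0 := by
        have hwga : ga1 * (de2*v 1 + be2*v 4) = 0 := by linear_combination E0
        have hwal : al1 * (de2*v 1 + be2*v 4) = 0 := by linear_combination E3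
        rcases mul_eq_zero.1 hwal with h | h
        · rcases mul_eq_zero.1 hwga with h' | h'
          · exact absurd ⟨h, h'⟩ hng1
          · exact h'
        · exact h
      have hu0 : ga2*v 1 + al2*v 4 = 0 := by
        have hude : de3 * (ga2*v 1 + al2*v 4) = 0 := by linear_combination E2
        have hube : be3 * (ga2*v 1 + al2*v 4) = 0 := by linear_combination E5
        rcases mul_eq_zero.1 hube with h | h
        · rcases mul_eq_zero.1 hude with h' | h'
          · exact absurd ⟨h, h'⟩ hng3
          · exact h'
        · exact h
      have hp0 : al1 * v 3 + ga1 * v 0 = 0 := by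
        linear_combination al2*E1 + ga2*E4 - al2*ga2*(be3*v 5 + de3*v 2)*htwo
          - (al1*v 3 + ga1*v 0)*h2
      have hq0 : be3 * v 5 + de3 * v 2 = 0 := by
        linear_combination be2*E1 + de2*E4 - be2*de2*(al1*v 3 + ga1*v 0)*htwo
          - (be3*v 5 + de3*v 2)*h2
      have hx2 : v 1 = 0 := by
        linear_combination al2*hw0 + be2*hu0 - al2*be2*v 4*htwo - v 1*h2
      have hy2 : v 4 = 0 := by
        linear_combination ga2*hw0 + de2*hu0 - ga2*de2*v 1*htwo - v 4*h2
      obtain ⟨s, hs0, hs3⟩ := pair_param hng1 hp0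
      obtain ⟨t, ht2, ht5⟩ := pair_param hng3 hq0
      have eq1 : al1*ga1*s^2 + be3*de3*t^2 = 0 := by
        rw [hs0, hs3, ht2, ht5, hx2, hy2] at hQ1
        linear_combination hQ1
      have eq2 : (c1*al1^2 + d1*ga1^2)*s^2 + (c3*be3^2 + d3*de3^2)*t^2 = 0 := by
        rw [hs0, hs3, ht2, ht5, hx2, hy2] at hQ2
        linear_combination hQ2 - a*eq1
      have hst : s ≠ 0 ∨ t ≠ 0 := by
        by_contra hc
        push_neg at hc
        apply hv0
        funext i
        fin_cases i
        · exact hs0.trans (by rw [hc.1]; exact mul_zero _)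
        · exact hx2
        · exact ht2.trans (by rw [hc.2]; exact mul_zero _)
        · exact hs3.trans (by rw [hc.1]; exact mul_zero _)
        · exact hy2
        · exact ht5.trans (by rw [hc.2]; exact mul_zero _)
      have key : al1*ga1*(c3*be3^2 + d3*de3^2) + be3*de3*(c1*al1^2 + d1*ga1^2) = 0 := by
        rcases hst with hs | ht
        · have h' : (al1*ga1*(c3*be3^2 + d3*de3^2) + be3*de3*(c1*al1^2 + d1*ga1^2)) * s^2
              = 0 := by
            linear_combination (c3*be3^2 + d3*de3^2)*eq1 + be3*de3*eq2
              - be3*de3*(c3*be3^2 + d3*de3^2)*t^2*htwo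
          exact (mul_eq_zero.1 h').resolve_right (pow_ne_zero 2 hs)
        · have h' : (al1*ga1*(c3*be3^2 + d3*de3^2) + be3*de3*(c1*al1^2 + d1*ga1^2)) * t^2
              = 0 := by
            linear_combination (c1*al1^2 + d1*ga1^2)*eq1 + al1*ga1*eq2
              - al1*ga1*(c1*al1^2 + d1*ga1^2)*s^2*htwo
          exact (mul_eq_zero.1 h').resolve_right (pow_ne_zero 2 ht)
      linear_combination (al2*de2 + be2*ga2)^2 * key
    · exfalso
      have hw0 : de2 * v 1 + be2 * v 4 = 0 := by
        have h' : lam * (lam * (de2*v 1 + be2*v 4)) = 0 := by rw [hlw]; exact hlq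
        exact (mul_eq_zero.1 ((mul_eq_zero.1 h').resolve_left hlam)).resolve_left hlam
      have hu0 : ga2 * v 1 + al2 * v 4 = 0 := by
        have h' : lam * (lam * (ga2*v 1 + al2*v 4)) = 0 := by rw [hlu]; exact hlp
        exact (mul_eq_zero.1 ((mul_eq_zero.1 h').resolve_left hlam)).resolve_left hlam
      have hp0 : al1 * v 3 + ga1 * v 0 = 0 := by rw [← hlu, hu0, mul_zero]
      have hq0 : be3 * v 5 + de3 * v 2 = 0 := by rw [← hlw, hw0, mul_zero]
      apply hv0
      have l0 : lam * v 0 = 0 := by linear_combination -E3 + al1 * hw0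
      have l3 : lam * v 3 = 0 := by linear_combination -E0 + ga1 * hw0
      have l5 : lam * v 5 = 0 := by linear_combination -E2 + de3 * hu0
      have l2 : lam * v 2 = 0 := by linear_combination -E5 + be3 * hu0
      have l4 : lam * v 4 = 0 := by linear_combination -E1 + de2 * hp0 + ga2 * hq0
      have l1 : lam * v 1 = 0 := by linear_combination -E4 + be2 * hp0 + al2 * hq0
      funext i
      fin_cases i
      · exact (mul_eq_zero.1 l0).resolve_left hlam
      · exact (mul_eq_zero.1 l1).resolve_left hlam
      · exact (mul_eq_zero.1 l2).resolve_left hlam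
      · exact (mul_eq_zero.1 l3).resolve_left hlam
      · exact (mul_eq_zero.1 l4).resolve_left hlam
      · exact (mul_eq_zero.1 l5).resolve_left hlam
  · intro hrhs
    have key : al1*ga1*(c3*be3^2 + d3*de3^2) + be3*de3*(c1*al1^2 + d1*ga1^2) = 0 := by
      linear_combination hrhs - (1 + (al2*de2 + be2*ga2)) *
        (al1*ga1*(c3*be3^2 + d3*de3^2) + be3*de3*(c1*al1^2 + d1*ga1^2)) * h2
    obtain ⟨S, T, hST, g1, g2⟩ : ∃ S T : k, ¬(S = 0 ∧ T = 0) ∧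
        (al1*ga1)*S + (be3*de3)*T = 0 ∧
        (c1*al1^2 + d1*ga1^2)*S + (c3*be3^2 + d3*de3^2)*T = 0 := by
      by_cases hA : al1*ga1 = 0
      · by_cases hB : be3*de3 = 0
        · by_cases hC : c1*al1^2 + d1*ga1^2 = 0
          · exact ⟨1, 0, by simp, by linear_combination hA, by linear_combination hC⟩
          · exact ⟨c3*be3^2 + d3*de3^2, c1*al1^2 + d1*ga1^2, fun h => hC h.2,
              by linear_combination (c3*be3^2 + d3*de3^2)*hA + (c1*al1^2 + d1*ga1^2)*hB,
              by linear_combination (c1*al1^2 + d1*ga1^2)*(c3*be3^2 + d3*de3^2)*htwo⟩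
        · exact ⟨be3*de3, al1*ga1, fun h => hB h.1,
            by linear_combination al1*ga1*(be3*de3)*htwo,
            by linear_combination key⟩
      · exact ⟨be3*de3, al1*ga1, fun h => hA h.2,
          by linear_combination al1*ga1*(be3*de3)*htwo,
          by linear_combination key⟩
    obtain ⟨s, hs⟩ := IsAlgClosed.exists_pow_nat_eq S (n := 2) (by norm_num)
    obtain ⟨t, ht⟩ := IsAlgClosed.exists_pow_nat_eq T (n := 2) (by norm_num)
    subst hs
    subst ht
    refine ⟨![al1*s, 0, be3*t, ga1*s, 0, de3*t], ?_, ?_, ?_, ?_⟩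
    · intro hz
      apply hST
      have ha0 : al1 * s = 0 := congrFun hz 0
      have hg0 : ga1 * s = 0 := congrFun hz 3
      have hb0 : be3 * t = 0 := congrFun hz 2
      have hd0 : de3 * t = 0 := congrFun hz 5
      have hs0 : s = 0 := by
        rcases mul_eq_zero.1 ha0 with h | h
        · rcases mul_eq_zero.1 hg0 with h' | h'
          · exact absurd ⟨h, h'⟩ hng1
          · exact h'
        · exact h
      have ht0 : t = 0 := by
        rcases mul_eq_zero.1 hb0 with h | h
        · rcases mul_eq_zero.1 hd0 with h' | h'
          · exact absurd ⟨h, h'⟩ hng3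
          · exact h'
        · exact h
      exact ⟨by rw [hs0]; ring, by rw [ht0]; ring⟩
    · rw [evalQ1]
      show al1*s * (ga1*s) + 0 * 0 + be3*t * (de3*t) = 0
      linear_combination g1
    · rw [evalQ2]
      show a * (al1*s * (ga1*s) + 0 * 0 + be3*t * (de3*t))
          + c1 * (al1*s)^2 + c2 * 0^2 + c3 * (be3*t)^2
          + d1 * (ga1*s)^2 + d2 * 0^2 + d3 * (de3*t)^2
          + be3*ga2 * (0 * (de3*t)) + al2*de3 * ((be3*t) * 0) + ga2*de3 * (0 * (be3*t))
          + al2*be3 * (0 * (de3*t))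
          + be2*ga1 * ((al1*s) * 0) + al1*de2 * (0 * (ga1*s)) + ga1*de2 * ((al1*s) * 0)
          + al1*be2 * ((ga1*s) * 0) = 0
      linear_combination g2 + a*g1
    · have hM : (Matrix.of fun (i : Fin 2) (j : Fin 6) =>
          eval ![al1*s, 0, be3*t, ga1*s, 0, de3*t] (pderiv j
            (![Q1p k, Q2c k a (be3*ga2) (al2*de3) (ga2*de3) (al2*be3) (be2*ga1) (al1*de2)
              (ga1*de2) (al1*be2) c1 c2 c3 d1 d2 d3] i)))
          = Matrix.of ![![ga1*s, 0, de3*t, al1*s, 0, be3*t],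
              a • ![ga1*s, 0, de3*t, al1*s, 0, be3*t]] := by
        ext i j
        fin_cases i
        · show eval ![al1*s, 0, be3*t, ga1*s, 0, de3*t] (pderiv j (Q1p k))
            = ![ga1*s, 0, de3*t, al1*s, 0, be3*t] j
          exact dQ1 _ j
        · show eval ![al1*s, 0, be3*t, ga1*s, 0, de3*t]
            (pderiv j (Q2c k a (be3*ga2) (al2*de3) (ga2*de3) (al2*be3) (be2*ga1) (al1*de2)
              (ga1*de2) (al1*be2) c1 c2 c3 d1 d2 d3))
            = a * (![ga1*s, 0, de3*t, al1*s, 0, be3*t] j)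
          rw [dQ2]
          fin_cases j
          · show a * (ga1*s) + (be2*ga1*0 + ga1*de2*0) = a * (ga1*s)
            ring
          · show a * 0 + (al1*de2*(ga1*s) + ga1*de2*(al1*s) + be3*ga2*(de3*t)
                + ga2*de3*(be3*t)) = a * 0
            linear_combination (al1*de2*ga1*s + be3*ga2*de3*t)*htwo
          · show a * (de3*t) + (al2*de3*0 + ga2*de3*0) = a * (de3*t)
            ring
          · show a * (al1*s) + (al1*de2*0 + al1*be2*0) = a * (al1*s)
            ring
          · show a * 0 + (al1*be2*(ga1*s) + be2*ga1*(al1*s) + al2*be3*(de3*t)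
                + al2*de3*(be3*t)) = a * 0
            linear_combination (al1*be2*ga1*s + al2*be3*de3*t)*htwo
          · show a * (be3*t) + (be3*ga2*0 + al2*be3*0) = a * (be3*t)
            ring
      rw [hM]
      exact aux_rank_le_one _ a
end

section
/- Let k be an algebraically closed field of characteristic 2. Suppose α_i, β_i, γ_i, δ_i ∈ k (i = 1,2,3) satisfy α_iδ_i + β_iγ_i = 1 for each i, and set b_1 = β_3γ_2, b_2 = α_2δ_3, b_3 = γ_2δ_3, b_4 = α_2β_3, b_5 = β_2γ_1, b_6 = α_1δ_2, b_7 = γ_1δ_2, b_8 = α_1β_2. Suppose c_1, c_3, d_1, d_3 ∈ k satisfy c_1(b_1b_8+b_4b_6)(b_2b_6+b_3b_8) + c_3(b_1b_5+b_4b_7)(b_1b_8+b_4b_6) + d_1(b_1b_5+b_4b_7)(b_2b_7+b_3b_5) + d_3(b_2b_6+b_3b_8)(b_2b_7+b_3b_5) ≠ 0. Then b_2b_4 + b_5b_8 ≠ 0 or b_1b_3 + b_6b_7 ≠ 0. -/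
/-- Lemma 3.4 (`(ξ₁, ξ₂) ≠ (0,0)`). -/
theorem stmt_7 (k : Type*) [Field k] [IsAlgClosed k] [CharP k 2]
    (al1 al2 al3 be1 be2 be3 ga1 ga2 ga3 de1 de2 de3 : k)
    (h1 : al1 * de1 + be1 * ga1 = 1) (h2 : al2 * de2 + be2 * ga2 = 1)
    (h3 : al3 * de3 + be3 * ga3 = 1)
    (b1 b2 b3 b4 b5 b6 b7 b8 : k)
    (hb1 : b1 = be3 * ga2) (hb2 : b2 = al2 * de3) (hb3 : b3 = ga2 * de3)
    (hb4 : b4 = al2 * be3) (hb5 : b5 = be2 * ga1) (hb6 : b6 = al1 * de2)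
    (hb7 : b7 = ga1 * de2) (hb8 : b8 = al1 * be2)
    (c1 c3 d1 d3 : k)
    (hns : c1 * ((b1*b8 + b4*b6) * (b2*b6 + b3*b8))
        + c3 * ((b1*b5 + b4*b7) * (b1*b8 + b4*b6))
        + d1 * ((b1*b5 + b4*b7) * (b2*b7 + b3*b5))
        + d3 * ((b2*b6 + b3*b8) * (b2*b7 + b3*b5)) ≠ 0) :
    b2 * b4 + b5 * b8 ≠ 0 ∨ b1 * b3 + b6 * b7 ≠ 0 := by
  by_contra hc
  push_neg at hc
  obtain ⟨hX, hY⟩ := hc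
  have two : (2 : k) = 0 := by exact_mod_cast CharP.cast_eq_zero k 2
  subst hb1 hb2 hb3 hb4 hb5 hb6 hb7 hb8
  have hbd : be3 * de3 = 0 := by
    linear_combination de2 ^ 2 * hX + be2 ^ 2 * hY
      - be3 * de3 * (al2 * de2 + be2 * ga2 + 1) * h2
      + (be3 * de3 * al2 * de2 * be2 * ga2 - al1 * be2 ^ 2 * ga1 * de2 ^ 2) * two
  have hag : al1 * ga1 = 0 := by
    linear_combination ga2 ^ 2 * hX + al2 ^ 2 * hY
      - al1 * ga1 * (al2 * de2 + be2 * ga2 + 1) * h2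
      + (al1 * ga1 * al2 * de2 * be2 * ga2 - al2 ^ 2 * be3 * ga2 ^ 2 * de3) * two
  apply hns
  linear_combination ((al2 * de2 + be2 * ga2) ^ 2 * (c1 * al1 ^ 2 + d1 * ga1 ^ 2)) * hbd
    + ((al2 * de2 + be2 * ga2) ^ 2 * (c3 * be3 ^ 2 + d3 * de3 ^ 2)) * hag
end

section
/- Let k be an algebraically closed field of characteristic 2, let a_1, a_2, a_3 ∈ k be pairwise distinct, and let c_1,c_2,c_3,d_1,d_2,d_3 ∈ k. For (x,y,z,t) ∈ k^4 define A = c_1x² + d_2y² + d_3z², B = c_2x² + d_1y² + d_3t², C = c_3x² + d_1z² + d_2t², D = (a_1+a_2)xy, E = (a_2+a_3)xt, F = (a_1+a_3)xz, and let q(α,β,γ) = Aα² + Bβ² + Cγ² + Dαβ + Eβγ + Fγα. Then: (i) as polynomials in k[x,y,z,t] one has AE² + BF² + CD² + DEF = x² · F_a, where F_a = (a_1+a_2)²(c_3x²y² + d_3z²t²) + (a_1+a_3)²(c_2x²z² + d_2y²t²) + (a_2+a_3)²(c_1x²t² + d_1y²z²) + (a_1+a_2)(a_2+a_3)(a_3+a_1)xyzt;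 and (ii) for every (x,y,z,t) with x ≠ 0 and (y,z,t) ≠ (0,0,0), the conic q has a singular point — i.e., there is a nonzero (α,β,γ) ∈ k^3 with q(α,β,γ) = 0 and all three partial derivatives of q vanishing at (α,β,γ) — if and only if F_a(x,y,z,t) = 0. -/
open MvPolynomial

/-- The Kummer quartic polynomial of the ordinary case; coordinates
`(x,y,z,t) = (X 0, X 1, X 2, X 3)`. -/
noncomputable def FaP (k : Type*) [Field k] (a1 a2 a3 c1 c2 c3 d1 d2 d3 : k) :
    MvPolynomial (Fin 4) k :=
  C ((a1+a2)^2) * (C c3 * (X 0 ^ 2 * X 1 ^ 2) + C d3 * (X 2 ^ 2 * X 3 ^ 2))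
    + C ((a1+a3)^2) * (C c2 * (X 0 ^ 2 * X 2 ^ 2) + C d2 * (X 1 ^ 2 * X 3 ^ 2))
    + C ((a2+a3)^2) * (C c1 * (X 0 ^ 2 * X 3 ^ 2) + C d1 * (X 1 ^ 2 * X 2 ^ 2))
    + C ((a1+a2)*(a2+a3)*(a3+a1)) * (X 0 * X 1 * X 2 * X 3)

/-- `A = c₁x² + d₂y² + d₃z²`. -/
noncomputable def PA (k : Type*) [Field k] (c1 d2 d3 : k) : MvPolynomial (Fin 4) k :=
  C c1 * X 0 ^ 2 + C d2 * X 1 ^ 2 + C d3 * X 2 ^ 2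

/-- `B = c₂x² + d₁y² + d₃t²`. -/
noncomputable def PB (k : Type*) [Field k] (c2 d1 d3 : k) : MvPolynomial (Fin 4) k :=
  C c2 * X 0 ^ 2 + C d1 * X 1 ^ 2 + C d3 * X 3 ^ 2

/-- `C = c₃x² + d₁z² + d₂t²`. -/
noncomputable def PCq (k : Type*) [Field k] (c3 d1 d2 : k) : MvPolynomial (Fin 4) k :=
  C c3 * X 0 ^ 2 + C d1 * X 2 ^ 2 + C d2 * X 3 ^ 2

/-- `D = (a₁+a₂)xy`. -/
noncomputable def PD (k : Type*) [Field k] (a1 a2 : k) : MvPolynomial (Fin 4) k :=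
  C (a1 + a2) * (X 0 * X 1)

/-- `E = (a₂+a₃)xt`. -/
noncomputable def PE (k : Type*) [Field k] (a2 a3 : k) : MvPolynomial (Fin 4) k :=
  C (a2 + a3) * (X 0 * X 3)

/-- `F = (a₁+a₃)xz`. -/
noncomputable def PF (k : Type*) [Field k] (a1 a3 : k) : MvPolynomial (Fin 4) k :=
  C (a1 + a3) * (X 0 * X 2)

/-- The conic `q(α,β,γ) = Aα² + Bβ² + Cγ² + Dαβ + Eβγ + Fγα` with scalar
coefficients, in variables `(α,β,γ) = (X 0, X 1, X 2)`. -/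
noncomputable def conicP (k : Type*) [Field k] (A B Cc D E F : k) :
    MvPolynomial (Fin 3) k :=
  C A * X 0 ^ 2 + C B * X 1 ^ 2 + C Cc * X 2 ^ 2
    + C D * (X 0 * X 1) + C E * (X 1 * X 2) + C F * (X 2 * X 0)

private lemma evalQ (k : Type*) [Field k] (A B Cc D E F : k) (w : Fin 3 → k) :
    eval w (conicP k A B Cc D E F)
      = A*w 0^2 + B*w 1^2 + Cc*w 2^2 + D*(w 0*w 1) + E*(w 1*w 2) + F*(w 2*w 0) := by
  simp [conicP]

private lemma evalP0 (k : Type*) [Field k] (A B Cc D E F : k) (w : Fin 3 → k) :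
    eval w (pderiv 0 (conicP k A B Cc D E F)) = 2*A*w 0 + D*w 1 + F*w 2 := by
  simp [conicP, pderiv_X]; ring

private lemma evalP1 (k : Type*) [Field k] (A B Cc D E F : k) (w : Fin 3 → k) :
    eval w (pderiv 1 (conicP k A B Cc D E F)) = 2*B*w 1 + D*w 0 + E*w 2 := by
  simp [conicP, pderiv_X]; ring

private lemma evalP2 (k : Type*) [Field k] (A B Cc D E F : k) (w : Fin 3 → k) :
    eval w (pderiv 2 (conicP k A B Cc D E F)) = 2*Cc*w 2 + E*w 1 + F*w 0 := by
  simp [conicP, pderiv_X]; ring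

private lemma keyS (k : Type*) [Field k] (a1 a2 a3 c1 c2 c3 d1 d2 d3 : k)
    (h2 : (2:k) = 0) (x y z t : k) :
  (c1*x^2+d2*y^2+d3*z^2)*((a2+a3)*(x*t))^2 + (c2*x^2+d1*y^2+d3*t^2)*((a1+a3)*(x*z))^2
    + (c3*x^2+d1*z^2+d2*t^2)*((a1+a2)*(x*y))^2
    + ((a1+a2)*(x*y))*((a2+a3)*(x*t))*((a1+a3)*(x*z))
  = x^2 * ((a1+a2)^2*(c3*(x^2*y^2)+d3*(z^2*t^2)) + (a1+a3)^2*(c2*(x^2*z^2)+d2*(y^2*t^2))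
    + (a2+a3)^2*(c1*(x^2*t^2)+d1*(y^2*z^2)) + (a1+a2)*(a2+a3)*(a3+a1)*(x*y*z*t)) := by
  linear_combination (d2*x^2*y^2*t^2*(a2^2+a2*a3+a1*a2-a1*a3)
    + d3*x^2*z^2*t^2*(a3^2+a2*a3+a1*a3-a1*a2)
    + d1*x^2*y^2*z^2*(a1^2+a1*a3+a1*a2-a2*a3)) * h2

/-- the discriminant identity `AE² + BF² + CD² + DEF = x²·F_a` and the
characterization of points whose associated conic is singular (ordinary case). -/
theorem stmt_8 (k : Type*) [Field k] [IsAlgClosed k] [CharP k 2]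
    (a1 a2 a3 c1 c2 c3 d1 d2 d3 : k)
    (h12 : a1 ≠ a2) (h13 : a1 ≠ a3) (h23 : a2 ≠ a3) :
    (PA k c1 d2 d3 * (PE k a2 a3) ^ 2 + PB k c2 d1 d3 * (PF k a1 a3) ^ 2
        + PCq k c3 d1 d2 * (PD k a1 a2) ^ 2
        + PD k a1 a2 * PE k a2 a3 * PF k a1 a3
      = X 0 ^ 2 * FaP k a1 a2 a3 c1 c2 c3 d1 d2 d3) ∧
    (∀ v : Fin 4 → k, v 0 ≠ 0 → ¬ (v 1 = 0 ∧ v 2 = 0 ∧ v 3 = 0) →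
      ((∃ w : Fin 3 → k, w ≠ 0 ∧
          eval w (conicP k (eval v (PA k c1 d2 d3)) (eval v (PB k c2 d1 d3))
            (eval v (PCq k c3 d1 d2)) (eval v (PD k a1 a2))
            (eval v (PE k a2 a3)) (eval v (PF k a1 a3))) = 0 ∧
          ∀ i : Fin 3, eval w (pderiv i
            (conicP k (eval v (PA k c1 d2 d3)) (eval v (PB k c2 d1 d3))
              (eval v (PCq k c3 d1 d2)) (eval v (PD k a1 a2))
              (eval v (PE k a2 a3)) (eval v (PF k a1 a3)))) = 0)
        ↔ eval v (FaP k a1 a2 a3 c1 c2 c3 d1 d2 d3) = 0)) := by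
  have h2 : (2:k) = 0 := by
    have := CharP.cast_eq_zero k 2
    simpa using this
  have ha12 : a1 + a2 ≠ 0 := fun h => h12 (by rw [← CharTwo.sub_eq_add] at h; exact sub_eq_zero.mp h)
  have ha13 : a1 + a3 ≠ 0 := fun h => h13 (by rw [← CharTwo.sub_eq_add] at h; exact sub_eq_zero.mp h)
  have ha23 : a2 + a3 ≠ 0 := fun h => h23 (by rw [← CharTwo.sub_eq_add] at h; exact sub_eq_zero.mp h)
  constructor
  · apply MvPolynomial.funext
    intro v
    simp only [FaP, PA, PB, PCq, PD, PE, PF, map_add, map_mul, map_pow, eval_C, eval_X]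
    linear_combination keyS k a1 a2 a3 c1 c2 c3 d1 d2 d3 h2 (v 0) (v 1) (v 2) (v 3)
  · intro v hx hv
    set Av := eval v (PA k c1 d2 d3) with hAv
    set Bv := eval v (PB k c2 d1 d3) with hBv
    set Cv := eval v (PCq k c3 d1 d2) with hCv
    set Dv := eval v (PD k a1 a2) with hDv
    set Ev := eval v (PE k a2 a3) with hEv
    set Fv := eval v (PF k a1 a3) with hFv
    have eD : Dv = (a1+a2) * (v 0 * v 1) := by rw [hDv]; simp [PD]
    have eE : Ev = (a2+a3) * (v 0 * v 3) := by rw [hEv]; simp [PE]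
    have eF : Fv = (a1+a3) * (v 0 * v 2) := by rw [hFv]; simp [PF]
    have keyv : Av*Ev^2 + Bv*Fv^2 + Cv*Dv^2 + Dv*Ev*Fv
        = (v 0)^2 * eval v (FaP k a1 a2 a3 c1 c2 c3 d1 d2 d3) := by
      rw [hAv, hBv, hCv, hDv, hEv, hFv]
      simp only [FaP, PA, PB, PCq, PD, PE, PF, map_add, map_mul, map_pow, eval_C, eval_X]
      linear_combination keyS k a1 a2 a3 c1 c2 c3 d1 d2 d3 h2 (v 0) (v 1) (v 2) (v 3)
    have hDEF : ¬(Dv = 0 ∧ Ev = 0 ∧ Fv = 0) := by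
      rintro ⟨hD, hE, hF⟩
      apply hv
      rw [eD] at hD; rw [eE] at hE; rw [eF] at hF
      refine ⟨?_, ?_, ?_⟩
      · rcases mul_eq_zero.mp hD with h | h
        · exact absurd h ha12
        · exact (mul_eq_zero.mp h).resolve_left hx
      · rcases mul_eq_zero.mp hF with h | h
        · exact absurd h ha13
        · exact (mul_eq_zero.mp h).resolve_left hx
      · rcases mul_eq_zero.mp hE with h | h
        · exact absurd h ha23
        · exact (mul_eq_zero.mp h).resolve_left hx
    constructor
    · rintro ⟨w, hw, hq, hd⟩
      rw [evalQ] at hq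
      have r1 : Dv*w 1 + Fv*w 2 = 0 := by
        have h := hd 0; rw [evalP0] at h
        linear_combination h - (Av*w 0)*h2
      have r2 : Dv*w 0 + Ev*w 2 = 0 := by
        have h := hd 1; rw [evalP1] at h
        linear_combination h - (Bv*w 1)*h2
      have r3 : Fv*w 0 + Ev*w 1 = 0 := by
        have h := hd 2; rw [evalP2] at h
        linear_combination h - (Cv*w 2)*h2
      have hS : Av*Ev^2 + Bv*Fv^2 + Cv*Dv^2 + Dv*Ev*Fv = 0 := by
        by_cases hD : Dv = 0
        · by_cases hE : Ev = 0
          · have hF : Fv ≠ 0 := fun h => hDEF ⟨hD, hE, h⟩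
            have hw1 : w 1 ≠ 0 := by
              intro h1
              apply hw; funext i; fin_cases i <;> simp only [Pi.zero_apply]
              · have h0 : Fv * w 0 = 0 := by linear_combination r3 - (w 1)*hE
                exact (mul_eq_zero.mp h0).resolve_left hF
              · exact h1
              · have h0 : Fv * w 2 = 0 := by linear_combination r1 - (w 1)*hD
                exact (mul_eq_zero.mp h0).resolve_left hF
            have hmain : (w 1)^2 * (Av*Ev^2 + Bv*Fv^2 + Cv*Dv^2 + Dv*Ev*Fv) = 0 := by
              linear_combination (Fv^2)*hq - (Cv*(Fv*w 2 - Dv*w 1) + Fv*(Fv*w 0 + Ev*w 1))*r1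
                - (Av*(Fv*w 0 - Ev*w 1))*r3 + (Dv*Ev*Fv*(w 1)^2)*h2
            exact (mul_eq_zero.mp hmain).resolve_left (pow_ne_zero 2 hw1)
          · have hw0 : w 0 ≠ 0 := by
              intro h0
              apply hw; funext i; fin_cases i <;> simp only [Pi.zero_apply]
              · exact h0
              · have h1 : Ev * w 1 = 0 := by linear_combination r3 - Fv*h0
                exact (mul_eq_zero.mp h1).resolve_left hE
              · have h1 : Ev * w 2 = 0 := by linear_combination r2 - Dv*h0
                exact (mul_eq_zero.mp h1).resolve_left hE
            have hmain : (w 0)^2 * (Av*Ev^2 + Bv*Fv^2 + Cv*Dv^2 + Dv*Ev*Fv) = 0 := by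
              linear_combination (Ev^2)*hq - (Bv*(Ev*w 1 - Fv*w 0) + Ev*(Ev*w 2 + Dv*w 0))*r3
                - (Cv*(Ev*w 2 - Dv*w 0))*r2 + (Dv*Ev*Fv*(w 0)^2)*h2
            exact (mul_eq_zero.mp hmain).resolve_left (pow_ne_zero 2 hw0)
        · have hw2 : w 2 ≠ 0 := by
            intro h2'
            apply hw; funext i; fin_cases i <;> simp only [Pi.zero_apply]
            · have h1 : Dv * w 0 = 0 := by linear_combination r2 - Ev*h2'
              exact (mul_eq_zero.mp h1).resolve_left hD
            · have h1 : Dv * w 1 = 0 := by linear_combination r1 - Fv*h2'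
              exact (mul_eq_zero.mp h1).resolve_left hD
            · exact h2'
          have hmain : (w 2)^2 * (Av*Ev^2 + Bv*Fv^2 + Cv*Dv^2 + Dv*Ev*Fv) = 0 := by
            linear_combination (Dv^2)*hq - (Av*(Dv*w 0 - Ev*w 2) + Dv*(Dv*w 1 + Fv*w 2))*r2
              - (Bv*(Dv*w 1 - Fv*w 2))*r1 + (Dv*Ev*Fv*(w 2)^2)*h2
          exact (mul_eq_zero.mp hmain).resolve_left (pow_ne_zero 2 hw2)
      have hxf : (v 0)^2 * eval v (FaP k a1 a2 a3 c1 c2 c3 d1 d2 d3) = 0 := by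
        rw [← keyv]; exact hS
      exact (mul_eq_zero.mp hxf).resolve_left (pow_ne_zero 2 hx)
    · intro hFa
      refine ⟨![Ev, Fv, Dv], ?_, ?_, ?_⟩
      · intro h
        apply hDEF
        refine ⟨?_, ?_, ?_⟩
        · have := congrFun h 2; simpa using this
        · have := congrFun h 0; simpa using this
        · have := congrFun h 1; simpa using this
      · rw [evalQ]
        simp only [Matrix.cons_val_zero, Matrix.cons_val_one, Matrix.head_cons,
          Matrix.cons_val_two, Matrix.tail_cons]
        linear_combination keyv + (v 0)^2 * hFa + (Dv*Ev*Fv)*h2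
      · intro i
        fin_cases i
        · rw [show (⟨0, by norm_num⟩ : Fin 3) = 0 from rfl, evalP0]
          simp only [Matrix.cons_val_zero, Matrix.cons_val_one, Matrix.head_cons,
            Matrix.cons_val_two, Matrix.tail_cons]
          linear_combination (Av*Ev + Dv*Fv)*h2
        · rw [show (⟨1, by norm_num⟩ : Fin 3) = 1 from rfl, evalP1]
          simp only [Matrix.cons_val_zero, Matrix.cons_val_one, Matrix.head_cons,
            Matrix.cons_val_two, Matrix.tail_cons]
          linear_combination (Bv*Fv + Dv*Ev)*h2
        · rw [show (⟨2, by norm_num⟩ : Fin 3) = 2 from rfl, evalP2]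
          simp only [Matrix.cons_val_zero, Matrix.cons_val_one, Matrix.head_cons,
            Matrix.cons_val_two, Matrix.tail_cons]
          linear_combination (Cv*Dv + Ev*Fv)*h2
end

section
/- Let k be an algebraically closed field of characteristic 2, let a_1, a_2, a_3 ∈ k be pairwise distinct, and let c_1,c_2,c_3,d_1,d_2,d_3 ∈ k be all nonzero. Let F_a = (a_1+a_2)²(c_3x²y² + d_3z²t²) + (a_1+a_3)²(c_2x²z² + d_2y²t²) + (a_2+a_3)²(c_1x²t² + d_1y²z²) + (a_1+a_2)(a_2+a_3)(a_3+a_1)xyzt ∈ k[x,y,z,t]. Then: (i) the singular points of the quartic surface S = {F_a = 0} in P^3(k) — points represented by nonzero (x,y,z,t) at which F_a and all four partial derivatives ∂F_a/∂x, ∂F_a/∂y, ∂F_a/∂z, ∂F_a/∂t vanish — are exactly the four coordinate points (1:0:0:0), (0:1:0:0), (0:0:1:0), (0:0:0:1); and (ii) letting e_i, f_i ∈ k be the unique square roots of d_i and c_i respectively, each coordinate hyperplane section of S is a double conic: F_a(0,y,z,t) = ((a_1+a_2)e_3zt + (a_1+a_3)e_2yt + (a_2+a_3)e_1yz)², F_a(x,0,z,t)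 = ((a_1+a_2)e_3zt + (a_1+a_3)f_2xz + (a_2+a_3)f_1xt)², F_a(x,y,0,t) = ((a_1+a_2)f_3xy + (a_1+a_3)e_2yt + (a_2+a_3)f_1xt)², F_a(x,y,z,0) = ((a_1+a_2)f_3xy + (a_1+a_3)f_2xz + (a_2+a_3)e_1yz)². -/
/-!
In characteristic 2 every term `x²y²` of `F_a` has zero partial derivatives, so the gradient of
`F_a` is `(a₁+a₂)(a₂+a₃)(a₃+a₁)` times that of `xyzt`, and the factor is nonzero as the `aᵢ` are
distinct. A singular point therefore has two vanishing coordinates; there `F_a` reduces to a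
single monomial `κ·(vₖvₗ)²` with `κ ≠ 0`, which forces a third coordinate to vanish.
The hyperplane sections are squares because squaring is additive in characteristic 2.
-/

open MvPolynomial

theorem forall_eval_pderiv_X_mul_X_mul_X_mul_X_eq_zero_iff {R : Type*} [CommRing R]
    [NoZeroDivisors R] (v : Fin 4 → R) :
    (∀ i, eval v (pderiv i (X 0 * X 1 * X 2 * X 3 : MvPolynomial (Fin 4) R)) = 0) ↔
      (v 0 = 0 ∧ v 1 = 0) ∨ (v 0 = 0 ∧ v 2 = 0) ∨ (v 0 = 0 ∧ v 3 = 0) ∨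
      (v 1 = 0 ∧ v 2 = 0) ∨ (v 1 = 0 ∧ v 3 = 0) ∨ (v 2 = 0 ∧ v 3 = 0) := by
  simp only [Fin.forall_fin_succ, IsEmpty.forall_iff]
  simp only [Derivation.leibniz, pderiv_X, ne_eq, Fin.reduceEq, not_false_eq_true,
    Pi.single_eq_of_ne, Pi.single_eq_same, smul_eq_mul, mul_zero, mul_one, zero_add, add_zero,
    map_mul, eval_X, mul_eq_zero, Fin.succ_zero_eq_one, Fin.succ_one_eq_two, Fin.reduceSucc,
    one_ne_zero, zero_ne_one, and_true]
  tauto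

section
variable {k : Type*} [Field k] (a1 a2 a3 c1 c2 c3 d1 d2 d3 : k)

lemma eval_FaP (v : Fin 4 → k) :
    eval v (FaP k a1 a2 a3 c1 c2 c3 d1 d2 d3) =
      (a1+a2)^2 * (c3 * (v 0 ^ 2 * v 1 ^ 2) + d3 * (v 2 ^ 2 * v 3 ^ 2))
      + (a1+a3)^2 * (c2 * (v 0 ^ 2 * v 2 ^ 2) + d2 * (v 1 ^ 2 * v 3 ^ 2))
      + (a2+a3)^2 * (c1 * (v 0 ^ 2 * v 3 ^ 2) + d1 * (v 1 ^ 2 * v 2 ^ 2))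
      + (a1+a2)*(a2+a3)*(a3+a1) * (v 0 * v 1 * v 2 * v 3) := by
  simp [FaP]

variable [CharP k 2]

lemma pderiv_FaP (i : Fin 4) :
    pderiv i (FaP k a1 a2 a3 c1 c2 c3 d1 d2 d3) =
      C ((a1+a2)*(a2+a3)*(a3+a1)) * pderiv i (X 0 * X 1 * X 2 * X 3) := by
  simp [FaP, pderiv_X, CharTwo.two_eq_zero]

variable {a1 a2 a3 c1 c2 c3 d1 d2 d3}

lemma isSingular_FaP_iff (h12 : a1 ≠ a2) (h13 : a1 ≠ a3) (h23 : a2 ≠ a3)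
    (hc1 : c1 ≠ 0) (hc2 : c2 ≠ 0) (hc3 : c3 ≠ 0)
    (hd1 : d1 ≠ 0) (hd2 : d2 ≠ 0) (hd3 : d3 ≠ 0) (v : Fin 4 → k) :
    (eval v (FaP k a1 a2 a3 c1 c2 c3 d1 d2 d3) = 0 ∧
        ∀ i : Fin 4, eval v (pderiv i (FaP k a1 a2 a3 c1 c2 c3 d1 d2 d3)) = 0) ↔
      (v 1 = 0 ∧ v 2 = 0 ∧ v 3 = 0) ∨ (v 0 = 0 ∧ v 2 = 0 ∧ v 3 = 0) ∨
        (v 0 = 0 ∧ v 1 = 0 ∧ v 3 = 0) ∨ (v 0 = 0 ∧ v 1 = 0 ∧ v 2 = 0) := by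
  have g12 : a1 + a2 ≠ 0 := mt CharTwo.add_eq_zero.mp h12
  have g13 : a1 + a3 ≠ 0 := mt CharTwo.add_eq_zero.mp h13
  have g23 : a2 + a3 ≠ 0 := mt CharTwo.add_eq_zero.mp h23
  have g31 : a3 + a1 ≠ 0 := add_comm a1 a3 ▸ g13
  simp only [pderiv_FaP, map_mul, eval_C, mul_eq_zero, g12, g23, g31, or_self, false_or,
    forall_eval_pderiv_X_mul_X_mul_X_mul_X_eq_zero_iff, eval_FaP]
  constructor
  · rintro ⟨hF, ⟨h0, h1⟩ | ⟨h0, h1⟩ | ⟨h0, h1⟩ | ⟨h0, h1⟩ | ⟨h0, h1⟩ | ⟨h0, h1⟩⟩ <;>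
      simp only [h0, h1, ne_eq, OfNat.ofNat_ne_zero, not_false_eq_true, zero_pow, mul_zero,
        zero_mul, add_zero, zero_add, mul_eq_zero, pow_eq_zero_iff, false_or, g12, g13, g23,
        hc1, hc2, hc3, hd1, hd2, hd3] at hF <;> tauto
  · rintro (⟨h1, h2, h3⟩ | ⟨h0, h2, h3⟩ | ⟨h0, h1, h3⟩ | ⟨h0, h1, h2⟩) <;> simp [*]

end

theorem stmt_10_general (k : Type*) [Field k] [CharP k 2]
    (a1 a2 a3 c1 c2 c3 d1 d2 d3 : k)
    (h12 : a1 ≠ a2) (h13 : a1 ≠ a3) (h23 : a2 ≠ a3)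
    (hc1 : c1 ≠ 0) (hc2 : c2 ≠ 0) (hc3 : c3 ≠ 0)
    (hd1 : d1 ≠ 0) (hd2 : d2 ≠ 0) (hd3 : d3 ≠ 0)
    (e1 e2 e3 f1 f2 f3 : k)
    (he1 : e1 ^ 2 = d1) (he2 : e2 ^ 2 = d2) (he3 : e3 ^ 2 = d3)
    (hf1 : f1 ^ 2 = c1) (hf2 : f2 ^ 2 = c2) (hf3 : f3 ^ 2 = c3) :
    (∀ v : Fin 4 → k, v ≠ 0 →
      ((eval v (FaP k a1 a2 a3 c1 c2 c3 d1 d2 d3) = 0 ∧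
          ∀ i : Fin 4, eval v (pderiv i (FaP k a1 a2 a3 c1 c2 c3 d1 d2 d3)) = 0)
        ↔ ((v 1 = 0 ∧ v 2 = 0 ∧ v 3 = 0) ∨ (v 0 = 0 ∧ v 2 = 0 ∧ v 3 = 0) ∨
           (v 0 = 0 ∧ v 1 = 0 ∧ v 3 = 0) ∨ (v 0 = 0 ∧ v 1 = 0 ∧ v 2 = 0)))) ∧
    (∀ y z t : k,
      eval ![0, y, z, t] (FaP k a1 a2 a3 c1 c2 c3 d1 d2 d3)
        = ((a1+a2)*e3*z*t + (a1+a3)*e2*y*t + (a2+a3)*e1*y*z) ^ 2) ∧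
    (∀ x z t : k,
      eval ![x, 0, z, t] (FaP k a1 a2 a3 c1 c2 c3 d1 d2 d3)
        = ((a1+a2)*e3*z*t + (a1+a3)*f2*x*z + (a2+a3)*f1*x*t) ^ 2) ∧
    (∀ x y t : k,
      eval ![x, y, 0, t] (FaP k a1 a2 a3 c1 c2 c3 d1 d2 d3)
        = ((a1+a2)*f3*x*y + (a1+a3)*e2*y*t + (a2+a3)*f1*x*t) ^ 2) ∧
    (∀ x y z : k,
      eval ![x, y, z, 0] (FaP k a1 a2 a3 c1 c2 c3 d1 d2 d3)
        = ((a1+a2)*f3*x*y + (a1+a3)*f2*x*z + (a2+a3)*e1*y*z) ^ 2) := by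
  have hsq (p q r : k) : (p + q + r) ^ 2 = p ^ 2 + q ^ 2 + r ^ 2 := by
    rw [CharTwo.add_sq, CharTwo.add_sq]
  subst he1 he2 he3 hf1 hf2 hf3
  refine ⟨fun v _ => isSingular_FaP_iff h12 h13 h23 hc1 hc2 hc3 hd1 hd2 hd3 v, ?_, ?_, ?_, ?_⟩ <;>
    intros <;> simp only [eval_FaP, hsq, Matrix.cons_val_zero, Matrix.cons_val_one,
      Matrix.cons_val] <;> ring

/-- the ordinary Kummer quartic surface has exactly the four
coordinate points as singular points, and its four coordinate hyperplane
sections are double conics (tropes). -/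
theorem stmt_10 (k : Type*) [Field k] [IsAlgClosed k] [CharP k 2]
    (a1 a2 a3 c1 c2 c3 d1 d2 d3 : k)
    (h12 : a1 ≠ a2) (h13 : a1 ≠ a3) (h23 : a2 ≠ a3)
    (hc1 : c1 ≠ 0) (hc2 : c2 ≠ 0) (hc3 : c3 ≠ 0)
    (hd1 : d1 ≠ 0) (hd2 : d2 ≠ 0) (hd3 : d3 ≠ 0)
    (e1 e2 e3 f1 f2 f3 : k)
    (he1 : e1 ^ 2 = d1) (he2 : e2 ^ 2 = d2) (he3 : e3 ^ 2 = d3)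
    (hf1 : f1 ^ 2 = c1) (hf2 : f2 ^ 2 = c2) (hf3 : f3 ^ 2 = c3) :
    (∀ v : Fin 4 → k, v ≠ 0 →
      ((eval v (FaP k a1 a2 a3 c1 c2 c3 d1 d2 d3) = 0 ∧
          ∀ i : Fin 4, eval v (pderiv i (FaP k a1 a2 a3 c1 c2 c3 d1 d2 d3)) = 0)
        ↔ ((v 1 = 0 ∧ v 2 = 0 ∧ v 3 = 0) ∨ (v 0 = 0 ∧ v 2 = 0 ∧ v 3 = 0) ∨
           (v 0 = 0 ∧ v 1 = 0 ∧ v 3 = 0) ∨ (v 0 = 0 ∧ v 1 = 0 ∧ v 2 = 0)))) ∧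
    (∀ y z t : k,
      eval ![0, y, z, t] (FaP k a1 a2 a3 c1 c2 c3 d1 d2 d3)
        = ((a1+a2)*e3*z*t + (a1+a3)*e2*y*t + (a2+a3)*e1*y*z) ^ 2) ∧
    (∀ x z t : k,
      eval ![x, 0, z, t] (FaP k a1 a2 a3 c1 c2 c3 d1 d2 d3)
        = ((a1+a2)*e3*z*t + (a1+a3)*f2*x*z + (a2+a3)*f1*x*t) ^ 2) ∧
    (∀ x y t : k,
      eval ![x, y, 0, t] (FaP k a1 a2 a3 c1 c2 c3 d1 d2 d3)
        = ((a1+a2)*f3*x*y + (a1+a3)*e2*y*t + (a2+a3)*f1*x*t) ^ 2) ∧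
    (∀ x y z : k,
      eval ![x, y, z, 0] (FaP k a1 a2 a3 c1 c2 c3 d1 d2 d3)
        = ((a1+a2)*f3*x*y + (a1+a3)*f2*x*z + (a2+a3)*e1*y*z) ^ 2) :=
  stmt_10_general k a1 a2 a3 c1 c2 c3 d1 d2 d3 h12 h13 h23 hc1 hc2 hc3 hd1 hd2 hd3 e1 e2 e3 f1 f2 f3
    he1 he2 he3 hf1 hf2 hf3
end

section
/- Let k be a field of characteristic 2 and let a_1,a_2,a_3,c_1,c_2,c_3,d_1,d_2,d_3 ∈ k. In k[x,y,z,t] consider the substitution X_1 = (a_2+a_3)xt, X_2 = (a_1+a_3)xz, X_3 = (a_1+a_2)xy, Y_1 = (a_2+a_3)yz, Y_2 = (a_1+a_3)yt, Y_3 = (a_1+a_2)zt. Then the following polynomial identities hold: X_1Y_1 + X_2Y_2 + X_3Y_3 = 0, a_1²X_1Y_1 + a_2²X_2Y_2 + a_3²X_3Y_3 = 0, and Σ_{i=1}^{3}(a_iX_iY_i + c_iX_i² + d_iY_i²) = F_a, where F_a = (a_1+a_2)²(c_3x²y² + d_3z²t²) + (a_1+a_3)²(c_2x²z² + d_2y²t²)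 + (a_2+a_3)²(c_1x²t² + d_1y²z²) + (a_1+a_2)(a_2+a_3)(a_3+a_1)xyzt. Consequently this linear system of quadrics maps the Kummer quartic surface {F_a = 0} ⊆ P^3 into the intersection Σ of the three quadrics X_1Y_1+X_2Y_2+X_3Y_3 = 0, Σ(a_iX_iY_i + c_iX_i² + d_iY_i²) = 0, Σ a_i²X_iY_i = 0 in P^5. -/
open MvPolynomial

section

variable (k : Type*) [Field k] (a1 a2 a3 : k)

/-- `X₁ = (a₂+a₃)xt`. -/
noncomputable def sX1 : MvPolynomial (Fin 4) k := C (a2 + a3) * (X 0 * X 3)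
/-- `X₂ = (a₁+a₃)xz`. -/
noncomputable def sX2 : MvPolynomial (Fin 4) k := C (a1 + a3) * (X 0 * X 2)
/-- `X₃ = (a₁+a₂)xy`. -/
noncomputable def sX3 : MvPolynomial (Fin 4) k := C (a1 + a2) * (X 0 * X 1)
/-- `Y₁ = (a₂+a₃)yz`. -/
noncomputable def sY1 : MvPolynomial (Fin 4) k := C (a2 + a3) * (X 1 * X 2)
/-- `Y₂ = (a₁+a₃)yt`. -/
noncomputable def sY2 : MvPolynomial (Fin 4) k := C (a1 + a3) * (X 1 * X 3)
/-- `Y₃ = (a₁+a₂)zt`. -/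
noncomputable def sY3 : MvPolynomial (Fin 4) k := C (a1 + a2) * (X 2 * X 3)

end

/-- the linear system of six quadrics mapping the ordinary Kummer
quartic surface to the intersection of three quadrics in P^5. -/
theorem stmt_15 (k : Type*) [Field k] [CharP k 2]
    (a1 a2 a3 c1 c2 c3 d1 d2 d3 : k) :
    (sX1 k a2 a3 * sY1 k a2 a3 + sX2 k a1 a3 * sY2 k a1 a3
      + sX3 k a1 a2 * sY3 k a1 a2 = 0) ∧
    (C (a1 ^ 2) * (sX1 k a2 a3 * sY1 k a2 a3)
      + C (a2 ^ 2) * (sX2 k a1 a3 * sY2 k a1 a3)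
      + C (a3 ^ 2) * (sX3 k a1 a2 * sY3 k a1 a2) = 0) ∧
    (C a1 * (sX1 k a2 a3 * sY1 k a2 a3)
      + C a2 * (sX2 k a1 a3 * sY2 k a1 a3)
      + C a3 * (sX3 k a1 a2 * sY3 k a1 a2)
      + C c1 * (sX1 k a2 a3) ^ 2 + C c2 * (sX2 k a1 a3) ^ 2
      + C c3 * (sX3 k a1 a2) ^ 2
      + C d1 * (sY1 k a2 a3) ^ 2 + C d2 * (sY2 k a1 a3) ^ 2
      + C d3 * (sY3 k a1 a2) ^ 2
      = FaP k a1 a2 a3 c1 c2 c3 d1 d2 d3) ∧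
    (∀ v : Fin 4 → k, eval v (FaP k a1 a2 a3 c1 c2 c3 d1 d2 d3) = 0 →
      eval v (sX1 k a2 a3 * sY1 k a2 a3 + sX2 k a1 a3 * sY2 k a1 a3
        + sX3 k a1 a2 * sY3 k a1 a2) = 0 ∧
      eval v (C a1 * (sX1 k a2 a3 * sY1 k a2 a3)
        + C a2 * (sX2 k a1 a3 * sY2 k a1 a3)
        + C a3 * (sX3 k a1 a2 * sY3 k a1 a2)
        + C c1 * (sX1 k a2 a3) ^ 2 + C c2 * (sX2 k a1 a3) ^ 2
        + C c3 * (sX3 k a1 a2) ^ 2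
        + C d1 * (sY1 k a2 a3) ^ 2 + C d2 * (sY2 k a1 a3) ^ 2
        + C d3 * (sY3 k a1 a2) ^ 2) = 0 ∧
      eval v (C (a1 ^ 2) * (sX1 k a2 a3 * sY1 k a2 a3)
        + C (a2 ^ 2) * (sX2 k a1 a3 * sY2 k a1 a3)
        + C (a3 ^ 2) * (sX3 k a1 a2 * sY3 k a1 a2)) = 0) := by

  have h : (2 : MvPolynomial (Fin 4) k) = 0 := by
    have h2 : (2 : k) = 0 := by exact_mod_cast CharP.cast_eq_zero k 2
    rw [← map_ofNat (C : k →+* MvPolynomial (Fin 4) k) 2, h2, map_zero]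
  have h1 : sX1 k a2 a3 * sY1 k a2 a3 + sX2 k a1 a3 * sY2 k a1 a3
      + sX3 k a1 a2 * sY3 k a1 a2 = 0 := by
    simp only [sX1, sX2, sX3, sY1, sY2, sY3, map_add]
    linear_combination h * ((C a1 ^ 2 + C a2 ^ 2 + C a3 ^ 2 + C a1 * C a2
      + C a1 * C a3 + C a2 * C a3) * (X 0 * X 1 * X 2 * X 3))
  have h2 : C (a1 ^ 2) * (sX1 k a2 a3 * sY1 k a2 a3)
      + C (a2 ^ 2) * (sX2 k a1 a3 * sY2 k a1 a3)
      + C (a3 ^ 2) * (sX3 k a1 a2 * sY3 k a1 a2) = 0 := by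
    simp only [sX1, sX2, sX3, sY1, sY2, sY3, map_add, map_pow]
    linear_combination h * ((C a2 ^ 2 * C a3 ^ 2 + C a1 * C a2 * C a3 ^ 2
      + C a1 * C a2 ^ 2 * C a3 + C a1 ^ 2 * C a3 ^ 2 + C a1 ^ 2 * C a2 * C a3
      + C a1 ^ 2 * C a2 ^ 2) * (X 0 * X 1 * X 2 * X 3))
  have h3 : C a1 * (sX1 k a2 a3 * sY1 k a2 a3)
      + C a2 * (sX2 k a1 a3 * sY2 k a1 a3)
      + C a3 * (sX3 k a1 a2 * sY3 k a1 a2)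
      + C c1 * (sX1 k a2 a3) ^ 2 + C c2 * (sX2 k a1 a3) ^ 2
      + C c3 * (sX3 k a1 a2) ^ 2
      + C d1 * (sY1 k a2 a3) ^ 2 + C d2 * (sY2 k a1 a3) ^ 2
      + C d3 * (sY3 k a1 a2) ^ 2
      = FaP k a1 a2 a3 c1 c2 c3 d1 d2 d3 := by
    simp only [sX1, sX2, sX3, sY1, sY2, sY3, FaP, map_add, map_mul, map_pow]
    linear_combination h * (2 * C a1 * C a2 * C a3 * (X 0 * X 1 * X 2 * X 3))
  refine ⟨h1, h2, h3, fun v hv => ?_⟩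
  rw [h1, h3, h2]
  simp [hv]
end

section
/- Let k be a field of characteristic 2 and let a, b_1,…,b_8, c_1,c_2,c_3, d_1,d_2,d_3 ∈ k satisfy b_1b_2 = b_3b_4, b_5b_6 = b_7b_8, b_5b_6b_7b_8 ≠ 0, and b_6b_8c_1 = b_5b_7d_1. In k[X_1,X_2,X_3,Y_1,Y_2,Y_3] set Q_1 = X_1Y_1 + X_2Y_2 + X_3Y_3, Q_2 = a(X_1Y_1+X_2Y_2+X_3Y_3) + Σ_{i=1}^{3}(c_iX_i² + d_iY_i²) + b_1X_2Y_3 + b_2X_3Y_2 + b_3X_2X_3 + b_4Y_2Y_3 + b_5X_1Y_2 + b_6X_2Y_1 + b_7X_1X_2 + b_8Y_1Y_2, and Q_3 = a²(X_1Y_1+X_2Y_2+X_3Y_3) + b_5b_7X_1² + (b_1b_3+b_6b_7)X_2² + b_2b_3X_3² + b_6b_8Y_1² + (b_2b_4+b_5b_8)Y_2² + b_1b_4Y_3² + (b_1b_5+b_4b_7)X_1Y_3 + (b_2b_6+b_3b_8)X_3Y_1 + (b_2b_7+b_3b_5)X_1X_3 + (b_1b_8+b_4b_6)Y_1Y_3.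 Let ι be the k-algebra substitution X_1 ↦ (b_8/b_5)Y_1, Y_1 ↦ (b_5/b_8)X_1, fixing X_2, X_3, Y_2, Y_3. Then ι leaves each of Q_1, Q_2, Q_3 invariant: Q_i ∘ ι = Q_i for i = 1,2,3. In particular ι induces an involution of the surface Σ_0 = {Q_1 = Q_2 = Q_3 = 0} in P^5. -/
open MvPolynomial

/-- The quadric `Q₃` of the supersingular case. -/
noncomputable def Q3c (k : Type*) [Field k]
    (a b1 b2 b3 b4 b5 b6 b7 b8 : k) : MvPolynomial (Fin 6) k :=
  C (a ^ 2) * (X 0 * X 3 + X 1 * X 4 + X 2 * X 5)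
    + C (b5*b7) * X 0 ^ 2 + C (b1*b3 + b6*b7) * X 1 ^ 2 + C (b2*b3) * X 2 ^ 2
    + C (b6*b8) * X 3 ^ 2 + C (b2*b4 + b5*b8) * X 4 ^ 2 + C (b1*b4) * X 5 ^ 2
    + C (b1*b5 + b4*b7) * (X 0 * X 5) + C (b2*b6 + b3*b8) * (X 2 * X 3)
    + C (b2*b7 + b3*b5) * (X 0 * X 2) + C (b1*b8 + b4*b6) * (X 3 * X 5)

/-- The substitution `ι : X₁ ↦ (b₈/b₅)Y₁, Y₁ ↦ (b₅/b₈)X₁`, fixing the other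
variables. -/
noncomputable def iotaSub (k : Type*) [Field k] (b5 b8 : k) :
    Fin 6 → MvPolynomial (Fin 6) k := fun i =>
  if i = 0 then C (b8 / b5) * X 3
  else if i = 3 then C (b5 / b8) * X 0
  else X i

/-- the involution `ι` leaves each of the three quadrics defining
`Σ₀` invariant. -/
theorem stmt_18 (k : Type*) [Field k] [CharP k 2]
    (a b1 b2 b3 b4 b5 b6 b7 b8 c1 c2 c3 d1 d2 d3 : k)
    (hb : b1 * b2 = b3 * b4) (hb' : b5 * b6 = b7 * b8)
    (hne : b5 * b6 * b7 * b8 ≠ 0)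
    (hnorm : b6 * b8 * c1 = b5 * b7 * d1) :
    aeval (iotaSub k b5 b8) (Q1p k) = Q1p k ∧
    aeval (iotaSub k b5 b8) (Q2c k a b1 b2 b3 b4 b5 b6 b7 b8 c1 c2 c3 d1 d2 d3)
      = Q2c k a b1 b2 b3 b4 b5 b6 b7 b8 c1 c2 c3 d1 d2 d3 ∧
    aeval (iotaSub k b5 b8) (Q3c k a b1 b2 b3 b4 b5 b6 b7 b8)
      = Q3c k a b1 b2 b3 b4 b5 b6 b7 b8 := by
  obtain ⟨h5, h6, h7, h8⟩ : b5 ≠ 0 ∧ b6 ≠ 0 ∧ b7 ≠ 0 ∧ b8 ≠ 0 := by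
    refine ⟨?_, ?_, ?_, ?_⟩ <;> (intro h; apply hne; rw [h]; ring)
  have hkey : c1 * b8 ^ 2 = d1 * b5 ^ 2 :=
    mul_left_cancel₀ h6 (by linear_combination b8 * hnorm - b5 * d1 * hb')
  have suv : (b8/b5) * (b5/b8) = 1 := by field_simp
  have s58 : b5 * (b8/b5) = b8 := by field_simp
  have s85 : b8 * (b5/b8) = b5 := by field_simp
  have s6 : b6 * (b5/b8) = b7 := by field_simp; linear_combination hb'
  have s7 : b7 * (b8/b5) = b6 := by field_simp; linear_combination - hb'
  have sc : c1 * (b8/b5)^2 = d1 := by field_simp; linear_combination hkey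
  have sd : d1 * (b5/b8)^2 = c1 := by field_simp; linear_combination - hkey
  have Luv : (C (b8/b5) : MvPolynomial (Fin 6) k) * C (b5/b8) = 1 := by
    rw [← C_mul, suv, C_1]
  have L58 : (C b5 : MvPolynomial (Fin 6) k) * C (b8/b5) = C b8 := by rw [← C_mul, s58]
  have L85 : (C b8 : MvPolynomial (Fin 6) k) * C (b5/b8) = C b5 := by rw [← C_mul, s85]
  have L6 : (C b6 : MvPolynomial (Fin 6) k) * C (b5/b8) = C b7 := by rw [← C_mul, s6]
  have L7 : (C b7 : MvPolynomial (Fin 6) k) * C (b8/b5) = C b6 := by rw [← C_mul, s7]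
  have Lc : (C c1 : MvPolynomial (Fin 6) k) * C (b8/b5) ^ 2 = C d1 := by
    rw [← C_pow, ← C_mul, sc]
  have Ld : (C d1 : MvPolynomial (Fin 6) k) * C (b5/b8) ^ 2 = C c1 := by
    rw [← C_pow, ← C_mul, sd]
  refine ⟨?_, ?_, ?_⟩
  · simp only [Q1p, iotaSub, map_add, map_mul, aeval_X, Fin.reduceEq, reduceIte]
    linear_combination (X 0 * X 3 : MvPolynomial (Fin 6) k) * Luv
  · simp only [Q2c, iotaSub, map_add, map_mul, map_pow, aeval_X, aeval_C, algebraMap_eq,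
      Fin.reduceEq, reduceIte]
    linear_combination (C a * (X 0 * X 3) : MvPolynomial (Fin 6) k) * Luv
      + X 3 ^ 2 * Lc + X 0 ^ 2 * Ld + (X 3 * X 4) * L58 + (X 0 * X 4) * L85
      + (X 0 * X 1) * L6 + (X 1 * X 3) * L7
  · simp only [Q3c, iotaSub, map_add, map_mul, map_pow, aeval_X, aeval_C, algebraMap_eq,
      C_mul, C_add, C_pow, Fin.reduceEq, reduceIte]
    linear_combination (C a ^ 2 * (X 0 * X 3) : MvPolynomial (Fin 6) k) * Luv
      + X 3 ^ 2 * (C b7 * C (b8/b5)) * L58 + X 3 ^ 2 * C b8 * L7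
      + X 0 ^ 2 * (C b8 * C (b5/b8)) * L6 + X 0 ^ 2 * C b7 * L85
      + (X 3 * X 5) * C b1 * L58 + (X 3 * X 5) * C b4 * L7
      + (X 0 * X 5) * C b1 * L85 + (X 0 * X 5) * C b4 * L6
      + (X 0 * X 2) * C b2 * L6 + (X 0 * X 2) * C b3 * L85
      + (X 2 * X 3) * C b2 * L7 + (X 2 * X 3) * C b3 * L58
end

section
/- Let k be an algebraically closed field of characteristic 2, let a_1, a_2, a_3 ∈ k be pairwise distinct, and let c_1,c_2,c_3,d_1,d_2,d_3 ∈ k. Consider the affine plane curve defined by G(t,z) = z² + (t+a_1)(t+a_2)(t+a_3)z + c_1d_1(t+a_2)²(t+a_3)² + c_2d_2(t+a_1)²(t+a_3)² + c_3d_3(t+a_1)²(t+a_2)² = 0 in the (t,z)-plane. Then this curve has a singular point — i.e., a point (t_0,z_0) ∈ k² at which G, ∂G/∂t, and ∂G/∂z all vanish — if and only if c_1d_1 c_2d_2 c_3d_3 = 0. -/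
open MvPolynomial

/-- The affine equation of the genus-2 curve attached to an ordinary pencil of
quadrics; variables `(t, z) = (X 0, X 1)`. -/
noncomputable def Gcurve (k : Type*) [Field k] (a1 a2 a3 c1 c2 c3 d1 d2 d3 : k) :
    MvPolynomial (Fin 2) k :=
  X 1 ^ 2 + (X 0 + C a1) * (X 0 + C a2) * (X 0 + C a3) * X 1
    + C (c1*d1) * ((X 0 + C a2) ^ 2 * (X 0 + C a3) ^ 2)
    + C (c2*d2) * ((X 0 + C a1) ^ 2 * (X 0 + C a3) ^ 2)
    + C (c3*d3) * ((X 0 + C a1) ^ 2 * (X 0 + C a2) ^ 2)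

lemma evalG (k : Type*) [Field k] (a1 a2 a3 c1 c2 c3 d1 d2 d3 : k) (p : Fin 2 → k) :
    eval p (Gcurve k a1 a2 a3 c1 c2 c3 d1 d2 d3) =
      p 1 ^ 2 + (p 0 + a1) * (p 0 + a2) * (p 0 + a3) * p 1
      + c1*d1 * ((p 0 + a2)^2 * (p 0 + a3)^2)
      + c2*d2 * ((p 0 + a1)^2 * (p 0 + a3)^2)
      + c3*d3 * ((p 0 + a1)^2 * (p 0 + a2)^2) := by
  simp [Gcurve]

lemma evalDz (k : Type*) [Field k] [CharP k 2] (a1 a2 a3 c1 c2 c3 d1 d2 d3 : k)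
    (p : Fin 2 → k) :
    eval p (pderiv 1 (Gcurve k a1 a2 a3 c1 c2 c3 d1 d2 d3)) =
      (p 0 + a1) * (p 0 + a2) * (p 0 + a3) := by
  have h2 : (2:k) = 0 := by exact_mod_cast CharP.cast_eq_zero k 2
  simp [Gcurve, pderiv_mul, pderiv_pow, pderiv_X, Pi.single_apply]
  exact Or.inl h2

lemma evalDt (k : Type*) [Field k] [CharP k 2] (a1 a2 a3 c1 c2 c3 d1 d2 d3 : k)
    (p : Fin 2 → k) :
    eval p (pderiv 0 (Gcurve k a1 a2 a3 c1 c2 c3 d1 d2 d3)) =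
      ((p 0 + a2)*(p 0 + a3) + (p 0 + a1)*(p 0 + a3) + (p 0 + a1)*(p 0 + a2)) * p 1 := by
  have h2 : (2:k) = 0 := by exact_mod_cast CharP.cast_eq_zero k 2
  simp [Gcurve, pderiv_mul, pderiv_pow, pderiv_X, Pi.single_apply]
  linear_combination (c1*d1*((p 0+a2)^2*(p 0+a3)+(p 0+a3)^2*(p 0+a2))
    + c2*d2*((p 0+a1)^2*(p 0+a3)+(p 0+a3)^2*(p 0+a1))
    + c3*d3*((p 0+a1)^2*(p 0+a2)+(p 0+a2)^2*(p 0+a1))) * h2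

lemma forward_case (k : Type*) [Field k] (a b c u v w t z : k)
    (hab : a ≠ b) (hac : a ≠ c)
    (hG : z^2 + (t+a)*(t+b)*(t+c)*z + u*((t+b)^2*(t+c)^2)
        + v*((t+a)^2*(t+c)^2) + w*((t+a)^2*(t+b)^2) = 0)
    (ht : ((t+b)*(t+c) + (t+a)*(t+c) + (t+a)*(t+b)) * z = 0)
    (hta : t + a = 0) : u = 0 := by
  have hb : t + b ≠ 0 := fun h => hab (by linear_combination hta - h)
  have hc : t + c ≠ 0 := fun h => hac (by linear_combination hta - h)
  have ht' : ((t+b)*(t+c)) * z = 0 := by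
    linear_combination ht - ((t+b)+(t+c))*z*hta
  have hz : z = 0 := (mul_eq_zero.1 ht').resolve_left (mul_ne_zero hb hc)
  have hG' : u * ((t+b)^2*(t+c)^2) = 0 := by
    linear_combination hG - (z + (t+a)*(t+b)*(t+c))*hz
      - (v*(t+a)*(t+c)^2 + w*(t+a)*(t+b)^2)*hta
  exact (mul_eq_zero.1 hG').resolve_right
    (mul_ne_zero (pow_ne_zero 2 hb) (pow_ne_zero 2 hc))

/-- the genus-2 curve of the ordinary pencil is singular iff
`c₁d₁c₂d₂c₃d₃ = 0`. -/
theorem stmt_19 (k : Type*) [Field k] [IsAlgClosed k] [CharP k 2]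
    (a1 a2 a3 c1 c2 c3 d1 d2 d3 : k)
    (h12 : a1 ≠ a2) (h13 : a1 ≠ a3) (h23 : a2 ≠ a3) :
    (∃ p : Fin 2 → k,
        eval p (Gcurve k a1 a2 a3 c1 c2 c3 d1 d2 d3) = 0 ∧
        eval p (pderiv 0 (Gcurve k a1 a2 a3 c1 c2 c3 d1 d2 d3)) = 0 ∧
        eval p (pderiv 1 (Gcurve k a1 a2 a3 c1 c2 c3 d1 d2 d3)) = 0)
      ↔ (c1 * d1) * (c2 * d2) * (c3 * d3) = 0 := by
  have h2 : (2:k) = 0 := by exact_mod_cast CharP.cast_eq_zero k 2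
  have hself : ∀ x : k, x + x = 0 := fun x => by linear_combination x * h2
  constructor
  · rintro ⟨p, hG, ht, hz⟩
    rw [evalG] at hG
    rw [evalDt] at ht
    rw [evalDz] at hz
    rcases mul_eq_zero.1 hz with hz' | h3
    · rcases mul_eq_zero.1 hz' with h1 | h2'
      · have : c1 * d1 = 0 :=
          forward_case k a1 a2 a3 (c1*d1) (c2*d2) (c3*d3) (p 0) (p 1) h12 h13
            (by linear_combination hG) (by linear_combination ht) h1
        rw [this]; ring
      · have : c2 * d2 = 0 :=
          forward_case k a2 a1 a3 (c2*d2) (c1*d1) (c3*d3) (p 0) (p 1) (Ne.symm h12) h23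
            (by linear_combination hG) (by linear_combination ht) h2'
        rw [this]; ring
    · have : c3 * d3 = 0 :=
        forward_case k a3 a1 a2 (c3*d3) (c1*d1) (c2*d2) (p 0) (p 1) (Ne.symm h13) (Ne.symm h23)
          (by linear_combination hG) (by linear_combination ht) h3
      rw [this]; ring
  · intro hprod
    rcases mul_eq_zero.1 hprod with h' | h3
    · rcases mul_eq_zero.1 h' with h1 | h2'
      · refine ⟨![a1, 0], ?_, ?_, ?_⟩
        · rw [evalG]; simp [hself a1, h1]
        · rw [evalDt]; simp
        · rw [evalDz]; simp [hself a1]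
      · refine ⟨![a2, 0], ?_, ?_, ?_⟩
        · rw [evalG]; simp [hself a2, h2']
        · rw [evalDt]; simp
        · rw [evalDz]; simp [hself a2]
    · refine ⟨![a3, 0], ?_, ?_, ?_⟩
      · rw [evalG]; simp [hself a3, h3]
      · rw [evalDt]; simp
      · rw [evalDz]; simp [hself a3]
end
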